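/- arXiv:1904.01839 — 2 statements merged into one kernel-verified Lean document; each statement's English description precedes it below -/
import Mathlib

section
/- For every τ ∈ [0,1] and every v ∈ ℝ⁸ with v₈ ≥ 0, one has F^τ(v) = 0 if and only if F(v) = 0; moreover, the set of v ∈ ℝ⁸ with v₈ ≥ 0 and F^τ(v) = 0 is exactly {w⁺, w̄, w⁻}. -/
open Filter Topology Matrix
open scoped ENNReal

noncomputable section

/-- The positive parameters of the blood coagulation system.
Indices `0..7` of `k`, `h`, `D` correspond to `k₁..k₈`, `h₁..h₈`, `D₁..D₈`;
indices `2..7` of `ρ` correspond to `ρ₃..ρ₈` (so `T⁰ = ρ₈ = ρ 7`). -/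
structure Params where
  k : Fin 8 → ℝ
  kb6 : ℝ
  kb8 : ℝ
  h : Fin 8 → ℝ
  ρ : Fin 8 → ℝ
  D : Fin 8 → ℝ

/-- All parameters are positive (`ρ i` only for the meaningful indices `i ≥ 2`). -/
def Params.Pos (p : Params) : Prop :=
  (∀ i, 0 < p.k i) ∧ 0 < p.kb6 ∧ 0 < p.kb8 ∧ (∀ i, 0 < p.h i) ∧
    (∀ i : Fin 8, 2 ≤ (i : ℕ) → 0 < p.ρ i) ∧ (∀ i, 0 < p.D i)

/-- The reaction terms `F = (F₁,…,F₈)` (component `i-1` is `Fᵢ`, `v (i-1)` is `vᵢ`). -/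
def Fvec (p : Params) (v : Fin 8 → ℝ) : Fin 8 → ℝ :=
  ![p.k 0 * v 2 * v 5 - p.h 0 * v 0,
    p.k 1 * v 3 * v 4 - p.h 1 * v 1,
    p.k 2 * v 7 * (p.ρ 2 - v 2) - p.h 2 * v 2,
    p.k 3 * v 7 * (p.ρ 3 - v 3) - p.h 3 * v 3,
    p.k 4 * v 6 * (p.ρ 4 - v 4) - p.h 4 * v 4,
    (p.k 5 * v 4 + p.kb6 * v 1) * (p.ρ 5 - v 5) - p.h 5 * v 5,
    p.k 6 * v 7 * (p.ρ 6 - v 6) - p.h 6 * v 6,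
    (p.k 7 * v 5 + p.kb8 * v 0) * (p.ρ 7 - v 7) - p.h 7 * v 7]

def phi3 (p : Params) (T : ℝ) : ℝ := p.k 2 * p.ρ 2 * T / (p.k 2 * T + p.h 2)

def phi4 (p : Params) (T : ℝ) : ℝ := p.k 3 * p.ρ 3 * T / (p.k 3 * T + p.h 3)

def phi7 (p : Params) (T : ℝ) : ℝ := p.k 6 * p.ρ 6 * T / (p.k 6 * T + p.h 6)

def phi5 (p : Params) (T : ℝ) : ℝ :=
  p.k 4 * p.ρ 4 * phi7 p T / (p.k 4 * phi7 p T + p.h 4)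

def phi2 (p : Params) (T : ℝ) : ℝ := p.k 1 / p.h 1 * (phi4 p T * phi5 p T)

def phi6 (p : Params) (T : ℝ) : ℝ :=
  p.ρ 5 * (p.k 5 * phi5 p T + p.kb6 * phi2 p T) /
    (p.k 5 * phi5 p T + p.kb6 * phi2 p T + p.h 5)

def phi1 (p : Params) (T : ℝ) : ℝ := p.k 0 / p.h 0 * (phi3 p T * phi6 p T)

/-- `P(T) = (k₈φ₆(T) + k̄₈φ₁(T))(T⁰ − T) − h₈T`. -/
def Ppoly (p : Params) (T : ℝ) : ℝ :=
  (p.k 7 * phi6 p T + p.kb8 * phi1 p T) * (p.ρ 7 - T) - p.h 7 * T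

/-- The vector `(φ₁(T),…,φ₇(T),T)`; `phivec p T̄ = w̄`, `phivec p T⁻ = w⁻`. -/
def phivec (p : Params) (T : ℝ) : Fin 8 → ℝ :=
  ![phi1 p T, phi2 p T, phi3 p T, phi4 p T, phi5 p T, phi6 p T, phi7 p T, T]

/-- Condition (P): `P` has exactly the three nonnegative zeros `0 < T̄ < T⁻`, with
`P′(0) < 0`, `P′(T̄) > 0`, `P′(T⁻) < 0`. -/
def CondP (p : Params) (Tb Tm : ℝ) : Prop :=
  0 < Tb ∧ Tb < Tm ∧
    (∀ T : ℝ, 0 ≤ T → (Ppoly p T = 0 ↔ T = 0 ∨ T = Tb ∨ T = Tm)) ∧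
    deriv (Ppoly p) 0 < 0 ∧ 0 < deriv (Ppoly p) Tb ∧ deriv (Ppoly p) Tm < 0

/-- `g` is smooth, nonnegative on `[0,∞)`, with support inside `(T̄, T⁻)`. -/
def GoodG (Tb Tm : ℝ) (g : ℝ → ℝ) : Prop :=
  ContDiff ℝ (⊤ : ℕ∞) g ∧ (∀ s : ℝ, 0 ≤ s → 0 ≤ g s) ∧ tsupport g ⊆ Set.Ioo Tb Tm

/-- The homotopy `F^τ`: components `1..7` are those of `F` and
`F^τ₈(v) = α^τ F₈(v) + β^τ P(v₈) + γ^τ g(v₈)`. -/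
def Ftau (p : Params) (τ₁ : ℝ) (g : ℝ → ℝ) (τ : ℝ) (v : Fin 8 → ℝ) : Fin 8 → ℝ :=
  fun i =>
    if i = 7 then
      (if τ < τ₁ then 1 else (1 - τ) / (1 - τ₁)) * Fvec p v 7 +
        (if τ < τ₁ then 0 else (τ - τ₁) / (1 - τ₁)) * Ppoly p (v 7) +
        (if τ < τ₁ then τ else τ₁) * g (v 7)
    else Fvec p v i

/-- The set `𝒞 = {v ∈ ℝ⁸ : vᵢ ≥ 0 for all i, vᵢ ≤ ρᵢ for i = 3,…,8}`. -/
def CSet (p : Params) : Set (Fin 8 → ℝ) :=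
  {v | (∀ i, 0 ≤ v i) ∧ ∀ i : Fin 8, 2 ≤ (i : ℕ) → v i ≤ p.ρ i}

/-- The partial derivative `∂FFᵢ/∂vⱼ` at `v`. -/
def pd (FF : (Fin 8 → ℝ) → Fin 8 → ℝ) (i j : Fin 8) (v : Fin 8 → ℝ) : ℝ :=
  deriv (fun t => FF (Function.update v j t) i) (v j)

/-- The Jacobian matrix of `FF` at `v`. -/
def Jac (FF : (Fin 8 → ℝ) → Fin 8 → ℝ) (v : Fin 8 → ℝ) : Matrix (Fin 8) (Fin 8) ℝ :=
  fun i j => pd FF i j v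

/-- `lam ∈ ℂ` is an eigenvalue of the real matrix `J`. -/
def IsEig (J : Matrix (Fin 8) (Fin 8) ℝ) (lam : ℂ) : Prop :=
  ∃ x : Fin 8 → ℂ, x ≠ 0 ∧ (J.map Complex.ofReal) *ᵥ x = lam • x

/-- A pulse for the reaction term `FF`: a `C²` decreasing positive solution of
`D w″ + FF(w) = 0` on `[0,∞)` with `w′(0) = 0` and `w(+∞) = 0`. -/
def IsPulse (p : Params) (FF : (Fin 8 → ℝ) → Fin 8 → ℝ) (w : ℝ → Fin 8 → ℝ) : Prop :=
  (∀ i, ContDiff ℝ 2 fun x => w x i) ∧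
    (∀ i : Fin 8, ∀ x : ℝ, 0 ≤ x →
      p.D i * deriv (deriv (fun y => w y i)) x + FF (w x) i = 0) ∧
    (∀ i, deriv (fun y => w y i) 0 = 0) ∧
    (∀ i, Tendsto (fun x => w x i) atTop (𝓝 0)) ∧
    (∀ i : Fin 8, ∀ x : ℝ, 0 < x → deriv (fun y => w y i) x < 0)

/-- A travelling wave for `FF` with speed `c`, connecting `wm` (at `−∞`) to `0` (at `+∞`). -/
def IsWave (p : Params) (FF : (Fin 8 → ℝ) → Fin 8 → ℝ) (wm : Fin 8 → ℝ) (c : ℝ)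
    (u : ℝ → Fin 8 → ℝ) : Prop :=
  (∀ i, ContDiff ℝ 2 fun x => u x i) ∧
    (∀ i : Fin 8, ∀ x : ℝ,
      p.D i * deriv (deriv (fun y => u y i)) x + c * deriv (fun y => u y i) x +
        FF (u x) i = 0) ∧
    (∀ i, Tendsto (fun x => u x i) atBot (𝓝 (wm i))) ∧
    (∀ i, Tendsto (fun x => u x i) atTop (𝓝 0))

/-- The weighted function `x ↦ μ(x)·z(x)` with `μ(x) = √(1+x²)`. -/
def wtd (z : ℝ → Fin 8 → ℝ) : ℝ → Fin 8 → ℝ := fun x => Real.sqrt (1 + x ^ 2) • z x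

/-- The weighted Hölder norm `‖z‖_{E¹_μ}`, valued in `ℝ≥0∞`
(the norm on `ℝ⁸ = Fin 8 → ℝ` is the maximum norm). -/
def E1norm (α : ℝ) (z : ℝ → Fin 8 → ℝ) : ℝ≥0∞ :=
  (⨆ x ∈ Set.Ici (0 : ℝ), ENNReal.ofReal
      (‖wtd z x‖ + ‖deriv (wtd z) x‖ + ‖deriv (deriv (wtd z)) x‖)) +
    ⨆ x ∈ Set.Ici (0 : ℝ), ⨆ y ∈ Set.Ici (0 : ℝ), ⨆ _ : x ≠ y,
      ENNReal.ofReal (‖deriv (deriv (wtd z)) x - deriv (deriv (wtd z)) y‖ / |x - y| ^ α)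

/-- A solution of the scalar pulse problem `D₈T″ + P(T) + τ₁g(T) = 0` on `[0,∞)`,
`T′(0) = 0`, `T(+∞) = 0`, `T′ < 0` on `(0,∞)`. -/
def ScalarPulse (p : Params) (τ₁ : ℝ) (g : ℝ → ℝ) (T : ℝ → ℝ) : Prop :=
  ContDiff ℝ 2 T ∧
    (∀ x : ℝ, 0 ≤ x → p.D 7 * deriv (deriv T) x + Ppoly p (T x) + τ₁ * g (T x) = 0) ∧
    deriv T 0 = 0 ∧ Tendsto T atTop (𝓝 0) ∧ ∀ x : ℝ, 0 < x → deriv T x < 0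

-- ===== auxiliary lemmas =====

section Aux
variable (p : Params)

lemma phi3_nonneg (hp : p.Pos) {T : ℝ} (hT : 0 ≤ T) : 0 ≤ phi3 p T :=
  div_nonneg (mul_nonneg (mul_nonneg (hp.1 2).le (hp.2.2.2.2.1 2 (by decide)).le) hT)
    (add_nonneg (mul_nonneg (hp.1 2).le hT) (hp.2.2.2.1 2).le)

lemma phi4_nonneg (hp : p.Pos) {T : ℝ} (hT : 0 ≤ T) : 0 ≤ phi4 p T :=
  div_nonneg (mul_nonneg (mul_nonneg (hp.1 3).le (hp.2.2.2.2.1 3 (by decide)).le) hT)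
    (add_nonneg (mul_nonneg (hp.1 3).le hT) (hp.2.2.2.1 3).le)

lemma phi7_nonneg (hp : p.Pos) {T : ℝ} (hT : 0 ≤ T) : 0 ≤ phi7 p T :=
  div_nonneg (mul_nonneg (mul_nonneg (hp.1 6).le (hp.2.2.2.2.1 6 (by decide)).le) hT)
    (add_nonneg (mul_nonneg (hp.1 6).le hT) (hp.2.2.2.1 6).le)

lemma phi5_nonneg (hp : p.Pos) {T : ℝ} (hT : 0 ≤ T) : 0 ≤ phi5 p T :=
  div_nonneg (mul_nonneg (mul_nonneg (hp.1 4).le (hp.2.2.2.2.1 4 (by decide)).le)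
      (phi7_nonneg p hp hT))
    (add_nonneg (mul_nonneg (hp.1 4).le (phi7_nonneg p hp hT)) (hp.2.2.2.1 4).le)

lemma phi2_nonneg (hp : p.Pos) {T : ℝ} (hT : 0 ≤ T) : 0 ≤ phi2 p T :=
  mul_nonneg (div_nonneg (hp.1 1).le (hp.2.2.2.1 1).le)
    (mul_nonneg (phi4_nonneg p hp hT) (phi5_nonneg p hp hT))

lemma phi6_nonneg (hp : p.Pos) {T : ℝ} (hT : 0 ≤ T) : 0 ≤ phi6 p T := by
  have hs : 0 ≤ p.k 5 * phi5 p T + p.kb6 * phi2 p T :=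
    add_nonneg (mul_nonneg (hp.1 5).le (phi5_nonneg p hp hT))
      (mul_nonneg hp.2.1.le (phi2_nonneg p hp hT))
  exact div_nonneg (mul_nonneg (hp.2.2.2.2.1 5 (by decide)).le hs)
    (add_nonneg hs (hp.2.2.2.1 5).le)

lemma den6_pos (hp : p.Pos) {T : ℝ} (hT : 0 ≤ T) :
    0 < p.k 5 * phi5 p T + p.kb6 * phi2 p T + p.h 5 :=
  add_pos_of_nonneg_of_pos
    (add_nonneg (mul_nonneg (hp.1 5).le (phi5_nonneg p hp hT))
      (mul_nonneg hp.2.1.le (phi2_nonneg p hp hT))) (hp.2.2.2.1 5)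

lemma contOn_phi3 (hp : p.Pos) : ContinuousOn (phi3 p) (Set.Ici 0) := by
  unfold phi3
  apply ContinuousOn.div (by fun_prop) (by fun_prop)
  intro t ht
  exact (add_pos_of_nonneg_of_pos (mul_nonneg (hp.1 2).le ht) (hp.2.2.2.1 2)).ne'

lemma contOn_phi4 (hp : p.Pos) : ContinuousOn (phi4 p) (Set.Ici 0) := by
  unfold phi4
  apply ContinuousOn.div (by fun_prop) (by fun_prop)
  intro t ht
  exact (add_pos_of_nonneg_of_pos (mul_nonneg (hp.1 3).le ht) (hp.2.2.2.1 3)).ne'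

lemma contOn_phi7 (hp : p.Pos) : ContinuousOn (phi7 p) (Set.Ici 0) := by
  unfold phi7
  apply ContinuousOn.div (by fun_prop) (by fun_prop)
  intro t ht
  exact (add_pos_of_nonneg_of_pos (mul_nonneg (hp.1 6).le ht) (hp.2.2.2.1 6)).ne'

lemma contOn_phi5 (hp : p.Pos) : ContinuousOn (phi5 p) (Set.Ici 0) := by
  unfold phi5
  apply ContinuousOn.div (continuousOn_const.mul (contOn_phi7 p hp))
    ((continuousOn_const.mul (contOn_phi7 p hp)).add continuousOn_const)
  intro t ht
  exact (add_pos_of_nonneg_of_pos (mul_nonneg (hp.1 4).le (phi7_nonneg p hp ht))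
    (hp.2.2.2.1 4)).ne'

lemma contOn_phi2 (hp : p.Pos) : ContinuousOn (phi2 p) (Set.Ici 0) := by
  unfold phi2
  exact continuousOn_const.mul ((contOn_phi4 p hp).mul (contOn_phi5 p hp))

lemma contOn_phi6 (hp : p.Pos) : ContinuousOn (phi6 p) (Set.Ici 0) := by
  unfold phi6
  apply ContinuousOn.div
    (continuousOn_const.mul ((continuousOn_const.mul (contOn_phi5 p hp)).add
      (continuousOn_const.mul (contOn_phi2 p hp))))
    (((continuousOn_const.mul (contOn_phi5 p hp)).add
      (continuousOn_const.mul (contOn_phi2 p hp))).add continuousOn_const)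
  intro t ht
  exact (den6_pos p hp ht).ne'

lemma contOn_phi1 (hp : p.Pos) : ContinuousOn (phi1 p) (Set.Ici 0) := by
  unfold phi1
  exact continuousOn_const.mul ((contOn_phi3 p hp).mul (contOn_phi6 p hp))

lemma contOn_Ppoly (hp : p.Pos) : ContinuousOn (Ppoly p) (Set.Ici 0) := by
  unfold Ppoly
  exact (((continuousOn_const.mul (contOn_phi6 p hp)).add
    (continuousOn_const.mul (contOn_phi1 p hp))).mul
      (continuousOn_const.sub continuousOn_id)).sub
    (continuousOn_const.mul continuousOn_id)

lemma phivec_zero : phivec p 0 = 0 := by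
  have h3 : phi3 p 0 = 0 := by rw [phi3]; simp
  have h4 : phi4 p 0 = 0 := by rw [phi4]; simp
  have h7 : phi7 p 0 = 0 := by rw [phi7]; simp
  have h5 : phi5 p 0 = 0 := by rw [phi5, h7]; simp
  have h2 : phi2 p 0 = 0 := by rw [phi2, h4]; simp
  have h6 : phi6 p 0 = 0 := by rw [phi6, h5, h2]; simp
  have h1 : phi1 p 0 = 0 := by rw [phi1, h3]; simp
  rw [phivec, h1, h2, h3, h4, h5, h6, h7]
  funext i
  fin_cases i <;> rfl

lemma Fvec_phivec_seven (T : ℝ) : Fvec p (phivec p T) 7 = Ppoly p T := rfl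

lemma Fvec_phivec (hp : p.Pos) {T : ℝ} (hT : 0 ≤ T) (i : Fin 8) (hi : i ≠ 7) :
    Fvec p (phivec p T) i = 0 := by
  fin_cases i
  · show p.k 0 * phi3 p T * phi6 p T - p.h 0 * phi1 p T = 0
    have hd := (hp.2.2.2.1 0).ne'
    rw [phi1]; field_simp; ring
  · show p.k 1 * phi4 p T * phi5 p T - p.h 1 * phi2 p T = 0
    have hd := (hp.2.2.2.1 1).ne'
    rw [phi2]; field_simp; ring
  · show p.k 2 * T * (p.ρ 2 - phi3 p T) - p.h 2 * phi3 p T = 0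
    have hd := (add_pos_of_nonneg_of_pos (mul_nonneg (hp.1 2).le hT) (hp.2.2.2.1 2)).ne'
    rw [phi3]; field_simp; ring
  · show p.k 3 * T * (p.ρ 3 - phi4 p T) - p.h 3 * phi4 p T = 0
    have hd := (add_pos_of_nonneg_of_pos (mul_nonneg (hp.1 3).le hT) (hp.2.2.2.1 3)).ne'
    rw [phi4]; field_simp; ring
  · show p.k 4 * phi7 p T * (p.ρ 4 - phi5 p T) - p.h 4 * phi5 p T = 0
    have hd := (add_pos_of_nonneg_of_pos (mul_nonneg (hp.1 4).le (phi7_nonneg p hp hT))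
      (hp.2.2.2.1 4)).ne'
    rw [phi5]; field_simp; ring
  · show (p.k 5 * phi5 p T + p.kb6 * phi2 p T) * (p.ρ 5 - phi6 p T) - p.h 5 * phi6 p T = 0
    have hd := (den6_pos p hp hT).ne'
    rw [phi6]; field_simp; ring
  · show p.k 6 * T * (p.ρ 6 - phi7 p T) - p.h 6 * phi7 p T = 0
    have hd := (add_pos_of_nonneg_of_pos (mul_nonneg (hp.1 6).le hT) (hp.2.2.2.1 6)).ne'
    rw [phi7]; field_simp; ring
  · exact absurd rfl hi

lemma solve_chain (hp : p.Pos) (v : Fin 8 → ℝ) (hv : 0 ≤ v 7)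
    (h : ∀ i : Fin 8, i ≠ 7 → Fvec p v i = 0) : v = phivec p (v 7) := by
  have hk := hp.1
  have hh := hp.2.2.2.1
  have hb2 : p.k 2 * v 7 * (p.ρ 2 - v 2) - p.h 2 * v 2 = 0 := h 2 (by decide)
  have hb3 : p.k 3 * v 7 * (p.ρ 3 - v 3) - p.h 3 * v 3 = 0 := h 3 (by decide)
  have hb6 : p.k 6 * v 7 * (p.ρ 6 - v 6) - p.h 6 * v 6 = 0 := h 6 (by decide)
  have e2 : v 2 = phi3 p (v 7) := by
    have hd : (0:ℝ) < p.k 2 * v 7 + p.h 2 :=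
      add_pos_of_nonneg_of_pos (mul_nonneg (hk 2).le hv) (hh 2)
    rw [phi3, eq_div_iff hd.ne']; linear_combination -hb2
  have e3 : v 3 = phi4 p (v 7) := by
    have hd : (0:ℝ) < p.k 3 * v 7 + p.h 3 :=
      add_pos_of_nonneg_of_pos (mul_nonneg (hk 3).le hv) (hh 3)
    rw [phi4, eq_div_iff hd.ne']; linear_combination -hb3
  have e6 : v 6 = phi7 p (v 7) := by
    have hd : (0:ℝ) < p.k 6 * v 7 + p.h 6 :=
      add_pos_of_nonneg_of_pos (mul_nonneg (hk 6).le hv) (hh 6)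
    rw [phi7, eq_div_iff hd.ne']; linear_combination -hb6
  have hb4 : p.k 4 * v 6 * (p.ρ 4 - v 4) - p.h 4 * v 4 = 0 := h 4 (by decide)
  rw [e6] at hb4
  have e4 : v 4 = phi5 p (v 7) := by
    have hd : (0:ℝ) < p.k 4 * phi7 p (v 7) + p.h 4 :=
      add_pos_of_nonneg_of_pos (mul_nonneg (hk 4).le (phi7_nonneg p hp hv)) (hh 4)
    rw [phi5, eq_div_iff hd.ne']; linear_combination -hb4
  have hb1 : p.k 1 * v 3 * v 4 - p.h 1 * v 1 = 0 := h 1 (by decide)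
  rw [e3, e4] at hb1
  have e1 : v 1 = phi2 p (v 7) := by
    rw [phi2, div_mul_eq_mul_div, eq_div_iff (hh 1).ne']; linear_combination -hb1
  have hb5 : (p.k 5 * v 4 + p.kb6 * v 1) * (p.ρ 5 - v 5) - p.h 5 * v 5 = 0 := h 5 (by decide)
  rw [e4, e1] at hb5
  have e5 : v 5 = phi6 p (v 7) := by
    rw [phi6, eq_div_iff (den6_pos p hp hv).ne']; linear_combination -hb5
  have hb0 : p.k 0 * v 2 * v 5 - p.h 0 * v 0 = 0 := h 0 (by decide)
  rw [e2, e5] at hb0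
  have e0 : v 0 = phi1 p (v 7) := by
    rw [phi1, div_mul_eq_mul_div, eq_div_iff (hh 0).ne']; linear_combination -hb0
  funext i
  fin_cases i
  · exact e0
  · exact e1
  · exact e2
  · exact e3
  · exact e4
  · exact e5
  · exact e6
  · rfl

lemma Fvec_zero_iff (hp : p.Pos) (v : Fin 8 → ℝ) (hv : 0 ≤ v 7) :
    Fvec p v = 0 ↔ v = phivec p (v 7) ∧ Ppoly p (v 7) = 0 := by
  constructor
  · intro h
    have hc7 := solve_chain p hp v hv (fun i _ => congrFun h i)
    refine ⟨hc7, ?_⟩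
    have h7 : Fvec p v 7 = 0 := congrFun h 7
    rw [hc7] at h7
    exact h7
  · rintro ⟨he, h0⟩
    funext i
    by_cases hi : i = 7
    · subst hi
      show Fvec p v 7 = 0
      rw [he]
      exact h0
    · show Fvec p v i = 0
      rw [he]
      exact Fvec_phivec p hp hv i hi

lemma Ppoly_pos (hp : p.Pos) {Tb Tm : ℝ} (hP : CondP p Tb Tm) :
    ∀ t ∈ Set.Ioo Tb Tm, 0 < Ppoly p t := by
  obtain ⟨hTb, hTbm, hzero, _, hdTb, _⟩ := hP
  intro t ht
  by_contra hle
  push_neg at hle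
  have ht0 : (0:ℝ) ≤ t := (lt_trans hTb ht.1).le
  have hne : Ppoly p t ≠ 0 := by
    intro h0
    rcases (hzero t ht0).1 h0 with rfl | rfl | rfl
    · exact absurd ht.1 (not_lt.2 hTb.le)
    · exact lt_irrefl _ ht.1
    · exact lt_irrefl _ ht.2
  have hPt : Ppoly p t < 0 := lt_of_le_of_ne hle hne
  have hPTb : Ppoly p Tb = 0 := (hzero Tb hTb.le).2 (Or.inr (Or.inl rfl))
  have hdiff : DifferentiableAt ℝ (Ppoly p) Tb :=
    differentiableAt_of_deriv_ne_zero hdTb.ne'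
  have hslope : Tendsto (slope (Ppoly p) Tb) (𝓝[≠] Tb) (𝓝 (deriv (Ppoly p) Tb)) :=
    hasDerivAt_iff_tendsto_slope.mp hdiff.hasDerivAt
  have hev1 : ∀ᶠ y in 𝓝[≠] Tb, 0 < slope (Ppoly p) Tb y :=
    hslope.eventually_const_lt hdTb
  have hmono : (𝓝[>] Tb) ≤ (𝓝[≠] Tb) := by
    apply nhdsWithin_mono
    intro x hx
    exact Set.mem_compl_singleton_iff.2 (ne_of_gt hx)
  have hev2 : Set.Ioo Tb t ∈ 𝓝[>] Tb := Ioo_mem_nhdsGT_of_mem ⟨le_rfl, ht.1⟩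
  obtain ⟨s, hs_slope, hs_mem⟩ := ((hev1.filter_mono hmono).and hev2).exists
  have hTbs : Tb < s := hs_mem.1
  have hst : s < t := hs_mem.2
  have hPs : 0 < Ppoly p s := by
    have h1 := mul_pos hs_slope (sub_pos.2 hTbs)
    rwa [slope_def_field, hPTb, sub_zero, div_mul_cancel₀ _ (sub_pos.2 hTbs).ne'] at h1
  have hsub : Set.Icc s t ⊆ Set.Ici (0:ℝ) :=
    fun x hx => le_trans (lt_trans hTb hTbs).le hx.1
  have hcont : ContinuousOn (Ppoly p) (Set.Icc s t) := (contOn_Ppoly p hp).mono hsub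
  have hivt := intermediate_value_Icc' hst.le hcont
  obtain ⟨c, hc_mem, hc_eq⟩ := hivt ⟨hPt.le, hPs.le⟩
  have hc0 : (0:ℝ) ≤ c := le_trans (lt_trans hTb hTbs).le hc_mem.1
  rcases (hzero c hc0).1 hc_eq with rfl | rfl | rfl
  · linarith [hc_mem.1]
  · linarith [hc_mem.1]
  · linarith [hc_mem.2, ht.2]

lemma g_eq_zero (hp : p.Pos) {Tb Tm : ℝ} (hP : CondP p Tb Tm) {g : ℝ → ℝ}
    (hg : GoodG Tb Tm g) {T : ℝ} (hT : 0 ≤ T) (h0 : Ppoly p T = 0) : g T = 0 := by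
  apply image_eq_zero_of_notMem_tsupport
  intro hmem
  have hio := hg.2.2 hmem
  rcases (hP.2.2.1 T hT).1 h0 with rfl | rfl | rfl
  · exact absurd hio.1 (not_lt.2 hP.1.le)
  · exact lt_irrefl _ hio.1
  · exact lt_irrefl _ hio.2

lemma scalar_iff (hp : p.Pos) {Tb Tm : ℝ} (hP : CondP p Tb Tm) {g : ℝ → ℝ}
    (hg : GoodG Tb Tm g) {c : ℝ} (hc : 0 ≤ c) {T : ℝ} (hT : 0 ≤ T) :
    Ppoly p T + c * g T = 0 ↔ Ppoly p T = 0 := by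
  constructor
  · intro he
    by_contra hne
    have hgne : g T ≠ 0 := by
      intro h0
      rw [h0, mul_zero, add_zero] at he
      exact hne he
    have hmem : T ∈ tsupport g := subset_closure (by exact hgne)
    have hio := hg.2.2 hmem
    have hpos := Ppoly_pos p hp hP T hio
    have hgnn : 0 ≤ g T := hg.2.1 T hT
    nlinarith
  · intro h0
    rw [h0, g_eq_zero p hp hP hg hT h0, mul_zero, add_zero]

lemma homotopy_zero_iff (hp : p.Pos) {Tb Tm : ℝ} (hP : CondP p Tb Tm) {g : ℝ → ℝ}
    (hg : GoodG Tb Tm g) (a b c : ℝ) (hab : a + b = 1) (hc : 0 ≤ c)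
    (v : Fin 8 → ℝ) (hv : 0 ≤ v 7) :
    (∀ i : Fin 8, (if i = 7 then
        a * Fvec p v 7 + b * Ppoly p (v 7) + c * g (v 7)
      else Fvec p v i) = 0) ↔ (v = phivec p (v 7) ∧ Ppoly p (v 7) = 0) := by
  constructor
  · intro h
    have hc7 := solve_chain p hp v hv (fun i hi => by
      have := h i; rwa [if_neg hi] at this)
    refine ⟨hc7, ?_⟩
    have hF8 : Fvec p v 7 = Ppoly p (v 7) := by
      conv_lhs => rw [hc7]
      rfl
    have h7 := h 7
    rw [if_pos rfl, hF8] at h7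
    have hsum : Ppoly p (v 7) + c * g (v 7) = 0 := by
      linear_combination h7 - Ppoly p (v 7) * hab
    exact (scalar_iff p hp hP hg hc hv).1 hsum
  · rintro ⟨he, h0⟩ i
    by_cases hi : i = 7
    · rw [if_pos hi]
      have hF8 : Fvec p v 7 = Ppoly p (v 7) := by
        conv_lhs => rw [he]
        rfl
      rw [hF8, h0, g_eq_zero p hp hP hg hv h0, mul_zero, mul_zero, mul_zero]
      ring
    · rw [if_neg hi, he]
      exact Fvec_phivec p hp hv i hi

end Aux

/-- For every `τ ∈ [0,1]` and `v` with `v₈ ≥ 0`: `F^τ(v) = 0 ↔ F(v) = 0`; moreover the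
set of such zeros is exactly `{w⁺, w̄, w⁻}`. -/
theorem Ftau_zeros (p : Params) (hp : p.Pos) (Tb Tm : ℝ) (hP : CondP p Tb Tm)
    (τ₁ : ℝ) (hτ₁ : τ₁ ∈ Set.Ioo (0 : ℝ) 1) (g : ℝ → ℝ) (hg : GoodG Tb Tm g) :
    ∀ τ ∈ Set.Icc (0 : ℝ) 1,
      (∀ v : Fin 8 → ℝ, 0 ≤ v 7 → (Ftau p τ₁ g τ v = 0 ↔ Fvec p v = 0)) ∧
      {v : Fin 8 → ℝ | 0 ≤ v 7 ∧ Ftau p τ₁ g τ v = 0} =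
        ({0, phivec p Tb, phivec p Tm} : Set (Fin 8 → ℝ)) := by
  intro τ hτ
  have hab : (if τ < τ₁ then (1:ℝ) else (1 - τ) / (1 - τ₁)) +
      (if τ < τ₁ then (0:ℝ) else (τ - τ₁) / (1 - τ₁)) = 1 := by
    split_ifs with h
    · norm_num
    · have hne : (1:ℝ) - τ₁ ≠ 0 := ne_of_gt (by linarith [hτ₁.2])
      rw [← add_div, div_eq_one_iff_eq hne]
      ring
  have hc : 0 ≤ (if τ < τ₁ then τ else τ₁) := by
    split_ifs
    exacts [hτ.1, hτ₁.1.le]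
  have hkey : ∀ v : Fin 8 → ℝ, 0 ≤ v 7 →
      (Ftau p τ₁ g τ v = 0 ↔ v = phivec p (v 7) ∧ Ppoly p (v 7) = 0) := by
    intro v hv
    have h1 : Ftau p τ₁ g τ v = 0 ↔ ∀ i : Fin 8,
        (if i = 7 then
          (if τ < τ₁ then (1:ℝ) else (1 - τ) / (1 - τ₁)) * Fvec p v 7 +
            (if τ < τ₁ then (0:ℝ) else (τ - τ₁) / (1 - τ₁)) * Ppoly p (v 7) +
            (if τ < τ₁ then τ else τ₁) * g (v 7)
        else Fvec p v i) = 0 := by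
      rw [funext_iff]
      exact Iff.rfl
    rw [h1]
    exact homotopy_zero_iff p hp hP hg _ _ _ hab hc v hv
  constructor
  · intro v hv
    rw [hkey v hv, Fvec_zero_iff p hp v hv]
  · ext v
    simp only [Set.mem_setOf_eq, Set.mem_insert_iff, Set.mem_singleton_iff]
    constructor
    · rintro ⟨hv, hz⟩
      obtain ⟨he, h0⟩ := (hkey v hv).1 hz
      rcases (hP.2.2.1 _ hv).1 h0 with h | h | h
      · left; rw [he, h, phivec_zero]
      · right; left; rw [he, h]
      · right; right; rw [he, h]
    · rintro (rfl | rfl | rfl)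
      · refine ⟨le_rfl, ?_⟩
        refine ((hkey 0 le_rfl).2 ⟨?_, ?_⟩)
        · exact (phivec_zero p).symm
        · exact (hP.2.2.1 0 le_rfl).2 (Or.inl rfl)
      · have hTb : (0:ℝ) ≤ Tb := hP.1.le
        refine ⟨hTb, ?_⟩
        refine ((hkey (phivec p Tb) hTb).2 ⟨rfl, ?_⟩)
        exact (hP.2.2.1 Tb hTb).2 (Or.inr (Or.inl rfl))
      · have hTm : (0:ℝ) ≤ Tm := (lt_trans hP.1 hP.2.1).le
        refine ⟨hTm, ?_⟩
        refine ((hkey (phivec p Tm) hTm).2 ⟨rfl, ?_⟩)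
        exact (hP.2.2.1 Tm hTm).2 (Or.inr (Or.inr rfl))

end
end

section
/- For every τ ∈ [0,1]: every complex eigenvalue of the Jacobian matrix J^τ(w⁺) of F^τ at w⁺ has negative real part; every complex eigenvalue of J^τ(w⁻) has negative real part; and J^τ(w̄) possesses an eigenvalue with positive real part. In other words, along the whole homotopy the stationary points w⁺ and w⁻ are stable while w̄ is unstable. -/
open Filter Topology Matrix
open scoped ENNReal

noncomputable section

namespace StabAux

variable {p : Params}

section Phis

variable (hp : p.Pos) {T : ℝ} (hT : 0 ≤ T)
include hp hT

lemma d7_pos : 0 < p.k 6 * T + p.h 6 := by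
  have := hp.1 6; have := hp.2.2.2.1 6; positivity

lemma d3_pos : 0 < p.k 2 * T + p.h 2 := by
  have := hp.1 2; have := hp.2.2.2.1 2; positivity

lemma d4_pos : 0 < p.k 3 * T + p.h 3 := by
  have := hp.1 3; have := hp.2.2.2.1 3; positivity

lemma phi7_nonneg : 0 ≤ phi7 p T := by
  have h1 := hp.1 6
  have h2 := (hp.2.2.2.2.1 6 (by decide))
  exact div_nonneg (by positivity) (d7_pos hp hT).le

lemma phi7_le : phi7 p T ≤ p.ρ 6 := by
  rw [phi7, div_le_iff₀ (d7_pos hp hT)]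
  nlinarith [hp.2.2.2.2.1 6 (by decide : 2 ≤ ((6:Fin 8):ℕ)), hp.2.2.2.1 6, hp.1 6]

lemma phi3_nonneg : 0 ≤ phi3 p T := by
  have h1 := hp.1 2
  have h2 := (hp.2.2.2.2.1 2 (by decide))
  exact div_nonneg (by positivity) (d3_pos hp hT).le

lemma phi3_le : phi3 p T ≤ p.ρ 2 := by
  rw [phi3, div_le_iff₀ (d3_pos hp hT)]
  nlinarith [hp.2.2.2.2.1 2 (by decide : 2 ≤ ((2:Fin 8):ℕ)), hp.2.2.2.1 2, hp.1 2]

lemma phi4_nonneg : 0 ≤ phi4 p T := by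
  have h1 := hp.1 3
  have h2 := (hp.2.2.2.2.1 3 (by decide))
  exact div_nonneg (by positivity) (d4_pos hp hT).le

lemma phi4_le : phi4 p T ≤ p.ρ 3 := by
  rw [phi4, div_le_iff₀ (d4_pos hp hT)]
  nlinarith [hp.2.2.2.2.1 3 (by decide : 2 ≤ ((3:Fin 8):ℕ)), hp.2.2.2.1 3, hp.1 3]

lemma d5_pos : 0 < p.k 4 * phi7 p T + p.h 4 := by
  have h1 := hp.1 4; have h2 := hp.2.2.2.1 4; have h3 := phi7_nonneg hp hT
  positivity

lemma phi5_nonneg : 0 ≤ phi5 p T := by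
  have h1 := hp.1 4
  have h2 := (hp.2.2.2.2.1 4 (by decide))
  have h3 := phi7_nonneg hp hT
  exact div_nonneg (by positivity) (d5_pos hp hT).le

lemma phi5_le : phi5 p T ≤ p.ρ 4 := by
  rw [phi5, div_le_iff₀ (d5_pos hp hT)]
  nlinarith [hp.2.2.2.2.1 4 (by decide : 2 ≤ ((4:Fin 8):ℕ)), hp.2.2.2.1 4, hp.1 4,
    phi7_nonneg hp hT]

lemma phi2_nonneg : 0 ≤ phi2 p T := by
  have h1 := hp.1 1; have h2 := hp.2.2.2.1 1
  have := phi4_nonneg hp hT; have := phi5_nonneg hp hT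
  rw [phi2]; positivity

lemma d6_pos : 0 < p.k 5 * phi5 p T + p.kb6 * phi2 p T + p.h 5 := by
  have h1 := hp.1 5; have h2 := hp.2.2.2.1 5; have h3 := phi5_nonneg hp hT
  have h4 := hp.2.1; have h5 := phi2_nonneg hp hT
  positivity

lemma phi6_nonneg : 0 ≤ phi6 p T := by
  have h1 := hp.1 5
  have h2 := (hp.2.2.2.2.1 5 (by decide))
  have h3 := phi5_nonneg hp hT
  have h4 := hp.2.1; have h5 := phi2_nonneg hp hT
  exact div_nonneg (by positivity) (d6_pos hp hT).le

lemma phi6_le : phi6 p T ≤ p.ρ 5 := by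
  rw [phi6, div_le_iff₀ (d6_pos hp hT)]
  nlinarith [hp.2.2.2.2.1 5 (by decide : 2 ≤ ((5:Fin 8):ℕ)), hp.2.2.2.1 5, hp.1 5,
    phi5_nonneg hp hT, phi2_nonneg hp hT, hp.2.1]

lemma phi1_nonneg : 0 ≤ phi1 p T := by
  have h1 := hp.1 0; have h2 := hp.2.2.2.1 0
  have := phi3_nonneg hp hT; have := phi6_nonneg hp hT
  rw [phi1]; positivity

lemma diff_phi7 : DifferentiableAt ℝ (phi7 p) T := by
  unfold phi7
  exact DifferentiableAt.div (by fun_prop) (by fun_prop) (d7_pos hp hT).ne'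

lemma diff_phi3 : DifferentiableAt ℝ (phi3 p) T := by
  unfold phi3
  exact DifferentiableAt.div (by fun_prop) (by fun_prop) (d3_pos hp hT).ne'

lemma diff_phi4 : DifferentiableAt ℝ (phi4 p) T := by
  unfold phi4
  exact DifferentiableAt.div (by fun_prop) (by fun_prop) (d4_pos hp hT).ne'

lemma diff_phi5 : DifferentiableAt ℝ (phi5 p) T := by
  have h7 := diff_phi7 hp hT
  unfold phi5
  exact DifferentiableAt.div (by fun_prop) (by fun_prop) (d5_pos hp hT).ne'

lemma diff_phi2 : DifferentiableAt ℝ (phi2 p) T := by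
  have h4 := diff_phi4 hp hT; have h5 := diff_phi5 hp hT
  unfold phi2; fun_prop

lemma diff_phi6 : DifferentiableAt ℝ (phi6 p) T := by
  have h5 := diff_phi5 hp hT; have h2 := diff_phi2 hp hT
  unfold phi6
  exact DifferentiableAt.div (by fun_prop) (by fun_prop) (d6_pos hp hT).ne'

lemma diff_phi1 : DifferentiableAt ℝ (phi1 p) T := by
  have h3 := diff_phi3 hp hT; have h6 := diff_phi6 hp hT
  unfold phi1; fun_prop

lemma diff_Ppoly : DifferentiableAt ℝ (Ppoly p) T := by
  have h1 := diff_phi1 hp hT; have h6 := diff_phi6 hp hT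
  unfold Ppoly; fun_prop

end Phis
section Ids

variable (hp : p.Pos) {T : ℝ} (hT : 0 ≤ T)
include hp hT

lemma Id3 : (p.k 2 * T + p.h 2) * deriv (phi3 p) T = p.k 2 * (p.ρ 2 - phi3 p T) := by
  have hd := diff_phi3 hp hT
  have hL : HasDerivAt (fun t => (p.k 2 * t + p.h 2) * phi3 p t)
      (p.k 2 * phi3 p T + (p.k 2 * T + p.h 2) * deriv (phi3 p) T) T := by
    have h1 : HasDerivAt (fun t : ℝ => p.k 2 * t + p.h 2) (p.k 2) T := by
      simpa using ((hasDerivAt_id T).const_mul (p.k 2)).add_const (p.h 2)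
    exact h1.mul hd.hasDerivAt
  have hR : HasDerivAt (fun t : ℝ => p.k 2 * p.ρ 2 * t) (p.k 2 * p.ρ 2) T := by
    simpa using (hasDerivAt_id T).const_mul (p.k 2 * p.ρ 2)
  have hev : (fun t => (p.k 2 * t + p.h 2) * phi3 p t) =ᶠ[𝓝 T]
      fun t => p.k 2 * p.ρ 2 * t := by
    have hc : ContinuousAt (fun t : ℝ => p.k 2 * t + p.h 2) T := by fun_prop
    filter_upwards [hc (Ioi_mem_nhds (d3_pos hp hT))] with t ht
    have hne : p.k 2 * t + p.h 2 ≠ 0 := ne_of_gt ht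
    rw [phi3]; field_simp
  have h := (hL.congr_of_eventuallyEq hev.symm).unique hR
  linarith

lemma Id4 : (p.k 3 * T + p.h 3) * deriv (phi4 p) T = p.k 3 * (p.ρ 3 - phi4 p T) := by
  have hd := diff_phi4 hp hT
  have hL : HasDerivAt (fun t => (p.k 3 * t + p.h 3) * phi4 p t)
      (p.k 3 * phi4 p T + (p.k 3 * T + p.h 3) * deriv (phi4 p) T) T := by
    have h1 : HasDerivAt (fun t : ℝ => p.k 3 * t + p.h 3) (p.k 3) T := by
      simpa using ((hasDerivAt_id T).const_mul (p.k 3)).add_const (p.h 3)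
    exact h1.mul hd.hasDerivAt
  have hR : HasDerivAt (fun t : ℝ => p.k 3 * p.ρ 3 * t) (p.k 3 * p.ρ 3) T := by
    simpa using (hasDerivAt_id T).const_mul (p.k 3 * p.ρ 3)
  have hev : (fun t => (p.k 3 * t + p.h 3) * phi4 p t) =ᶠ[𝓝 T]
      fun t => p.k 3 * p.ρ 3 * t := by
    have hc : ContinuousAt (fun t : ℝ => p.k 3 * t + p.h 3) T := by fun_prop
    filter_upwards [hc (Ioi_mem_nhds (d4_pos hp hT))] with t ht
    have hne : p.k 3 * t + p.h 3 ≠ 0 := ne_of_gt ht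
    rw [phi4]; field_simp
  have h := (hL.congr_of_eventuallyEq hev.symm).unique hR
  linarith

lemma Id7 : (p.k 6 * T + p.h 6) * deriv (phi7 p) T = p.k 6 * (p.ρ 6 - phi7 p T) := by
  have hd := diff_phi7 hp hT
  have hL : HasDerivAt (fun t => (p.k 6 * t + p.h 6) * phi7 p t)
      (p.k 6 * phi7 p T + (p.k 6 * T + p.h 6) * deriv (phi7 p) T) T := by
    have h1 : HasDerivAt (fun t : ℝ => p.k 6 * t + p.h 6) (p.k 6) T := by
      simpa using ((hasDerivAt_id T).const_mul (p.k 6)).add_const (p.h 6)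
    exact h1.mul hd.hasDerivAt
  have hR : HasDerivAt (fun t : ℝ => p.k 6 * p.ρ 6 * t) (p.k 6 * p.ρ 6) T := by
    simpa using (hasDerivAt_id T).const_mul (p.k 6 * p.ρ 6)
  have hev : (fun t => (p.k 6 * t + p.h 6) * phi7 p t) =ᶠ[𝓝 T]
      fun t => p.k 6 * p.ρ 6 * t := by
    have hc : ContinuousAt (fun t : ℝ => p.k 6 * t + p.h 6) T := by fun_prop
    filter_upwards [hc (Ioi_mem_nhds (d7_pos hp hT))] with t ht
    have hne : p.k 6 * t + p.h 6 ≠ 0 := ne_of_gt ht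
    rw [phi7]; field_simp
  have h := (hL.congr_of_eventuallyEq hev.symm).unique hR
  linarith

lemma Id5 : (p.k 4 * phi7 p T + p.h 4) * deriv (phi5 p) T
    = p.k 4 * (p.ρ 4 - phi5 p T) * deriv (phi7 p) T := by
  have hd7 := diff_phi7 hp hT
  have hd5 := diff_phi5 hp hT
  have h1 : HasDerivAt (fun t : ℝ => p.k 4 * phi7 p t + p.h 4)
      (p.k 4 * deriv (phi7 p) T) T :=
    (hd7.hasDerivAt.const_mul (p.k 4)).add_const (p.h 4)
  have hL : HasDerivAt (fun t => (p.k 4 * phi7 p t + p.h 4) * phi5 p t)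
      (p.k 4 * deriv (phi7 p) T * phi5 p T
        + (p.k 4 * phi7 p T + p.h 4) * deriv (phi5 p) T) T :=
    h1.mul hd5.hasDerivAt
  have hR : HasDerivAt (fun t : ℝ => p.k 4 * p.ρ 4 * phi7 p t)
      (p.k 4 * p.ρ 4 * deriv (phi7 p) T) T := hd7.hasDerivAt.const_mul _
  have hev : (fun t => (p.k 4 * phi7 p t + p.h 4) * phi5 p t) =ᶠ[𝓝 T]
      fun t => p.k 4 * p.ρ 4 * phi7 p t := by
    have hc : ContinuousAt (fun t : ℝ => p.k 4 * phi7 p t + p.h 4) T := by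
      exact (hd7.continuousAt.const_smul (p.k 4)).add continuousAt_const
    filter_upwards [hc (Ioi_mem_nhds (d5_pos hp hT))] with t ht
    have hne : p.k 4 * phi7 p t + p.h 4 ≠ 0 := ne_of_gt ht
    rw [phi5]; field_simp
  have h := (hL.congr_of_eventuallyEq hev.symm).unique hR
  nlinarith [h]

lemma Id2 : p.h 1 * deriv (phi2 p) T
    = p.k 1 * phi5 p T * deriv (phi4 p) T + p.k 1 * phi4 p T * deriv (phi5 p) T := by
  have hd4 := diff_phi4 hp hT
  have hd5 := diff_phi5 hp hT
  have hL : HasDerivAt (phi2 p)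
      (p.k 1 / p.h 1 * (deriv (phi4 p) T * phi5 p T + phi4 p T * deriv (phi5 p) T)) T :=
    (hd4.hasDerivAt.mul hd5.hasDerivAt).const_mul _
  have h := hL.deriv
  have hh1 := (hp.2.2.2.1 1).ne'
  rw [h]; field_simp

lemma Id6 : (p.k 5 * phi5 p T + p.kb6 * phi2 p T + p.h 5) * deriv (phi6 p) T
    = (p.k 5 * deriv (phi5 p) T + p.kb6 * deriv (phi2 p) T) * (p.ρ 5 - phi6 p T) := by
  have hd5 := diff_phi5 hp hT
  have hd2 := diff_phi2 hp hT
  have hd6 := diff_phi6 hp hT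
  have h0 : HasDerivAt (fun t : ℝ => p.k 5 * phi5 p t + p.kb6 * phi2 p t)
      (p.k 5 * deriv (phi5 p) T + p.kb6 * deriv (phi2 p) T) T :=
    (hd5.hasDerivAt.const_mul _).add (hd2.hasDerivAt.const_mul _)
  have h1 : HasDerivAt (fun t : ℝ => p.k 5 * phi5 p t + p.kb6 * phi2 p t + p.h 5)
      (p.k 5 * deriv (phi5 p) T + p.kb6 * deriv (phi2 p) T) T := h0.add_const _
  have hL : HasDerivAt (fun t => (p.k 5 * phi5 p t + p.kb6 * phi2 p t + p.h 5) * phi6 p t)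
      ((p.k 5 * deriv (phi5 p) T + p.kb6 * deriv (phi2 p) T) * phi6 p T
        + (p.k 5 * phi5 p T + p.kb6 * phi2 p T + p.h 5) * deriv (phi6 p) T) T :=
    h1.mul hd6.hasDerivAt
  have hR : HasDerivAt (fun t : ℝ => p.ρ 5 * (p.k 5 * phi5 p t + p.kb6 * phi2 p t))
      (p.ρ 5 * (p.k 5 * deriv (phi5 p) T + p.kb6 * deriv (phi2 p) T)) T :=
    h0.const_mul _
  have hev : (fun t => (p.k 5 * phi5 p t + p.kb6 * phi2 p t + p.h 5) * phi6 p t) =ᶠ[𝓝 T]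
      fun t => p.ρ 5 * (p.k 5 * phi5 p t + p.kb6 * phi2 p t) := by
    have hc : ContinuousAt (fun t : ℝ => p.k 5 * phi5 p t + p.kb6 * phi2 p t + p.h 5) T := by
      exact ((hd5.continuousAt.const_smul (p.k 5)).add
        (hd2.continuousAt.const_smul (p.kb6))).add continuousAt_const
    filter_upwards [hc (Ioi_mem_nhds (d6_pos hp hT))] with t ht
    have hne : p.k 5 * phi5 p t + p.kb6 * phi2 p t + p.h 5 ≠ 0 := ne_of_gt ht
    rw [phi6]; field_simp
  have h := (hL.congr_of_eventuallyEq hev.symm).unique hR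
  nlinarith [h]

lemma Id1 : p.h 0 * deriv (phi1 p) T
    = p.k 0 * phi6 p T * deriv (phi3 p) T + p.k 0 * phi3 p T * deriv (phi6 p) T := by
  have hd3 := diff_phi3 hp hT
  have hd6 := diff_phi6 hp hT
  have hL : HasDerivAt (phi1 p)
      (p.k 0 / p.h 0 * (deriv (phi3 p) T * phi6 p T + phi3 p T * deriv (phi6 p) T)) T :=
    (hd3.hasDerivAt.mul hd6.hasDerivAt).const_mul _
  have h := hL.deriv
  have hh0 := (hp.2.2.2.1 0).ne'
  rw [h]; field_simp

lemma IdP : deriv (Ppoly p) T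
    = (p.k 7 * deriv (phi6 p) T + p.kb8 * deriv (phi1 p) T) * (p.ρ 7 - T)
      - (p.k 7 * phi6 p T + p.kb8 * phi1 p T) - p.h 7 := by
  have hd6 := diff_phi6 hp hT
  have hd1 := diff_phi1 hp hT
  have hA : HasDerivAt (fun t : ℝ => p.k 7 * phi6 p t + p.kb8 * phi1 p t)
      (p.k 7 * deriv (phi6 p) T + p.kb8 * deriv (phi1 p) T) T :=
    (hd6.hasDerivAt.const_mul _).add (hd1.hasDerivAt.const_mul _)
  have hB : HasDerivAt (fun t : ℝ => p.ρ 7 - t) (-1) T := by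
    simpa using (hasDerivAt_id T).const_sub (p.ρ 7)
  have hC : HasDerivAt (fun t : ℝ => p.h 7 * t) (p.h 7) T := by
    simpa using (hasDerivAt_id T).const_mul (p.h 7)
  have hL : HasDerivAt (Ppoly p)
      ((p.k 7 * deriv (phi6 p) T + p.kb8 * deriv (phi1 p) T) * (p.ρ 7 - T)
        + (p.k 7 * phi6 p T + p.kb8 * phi1 p T) * (-1) - p.h 7) T :=
    (hA.mul hB).sub hC
  rw [hL.deriv]; ring

lemma u3_nonneg : 0 ≤ deriv (phi3 p) T := by
  have h := Id3 hp hT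
  have h1 := d3_pos hp hT
  have h2 := phi3_le hp hT
  have h3 := hp.1 2
  nlinarith

lemma u4_nonneg : 0 ≤ deriv (phi4 p) T := by
  have h := Id4 hp hT
  have h1 := d4_pos hp hT
  have h2 := phi4_le hp hT
  have h3 := hp.1 3
  nlinarith

lemma u7_nonneg : 0 ≤ deriv (phi7 p) T := by
  have h := Id7 hp hT
  have h1 := d7_pos hp hT
  have h2 := phi7_le hp hT
  have h3 := hp.1 6
  nlinarith

lemma u5_nonneg : 0 ≤ deriv (phi5 p) T := by
  have h := Id5 hp hT
  have h1 := d5_pos hp hT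
  have h2 := phi5_le hp hT
  have h3 := hp.1 4
  have h4 := u7_nonneg hp hT
  nlinarith [mul_nonneg (mul_nonneg h3.le (sub_nonneg.2 h2)) h4]

lemma u2_nonneg : 0 ≤ deriv (phi2 p) T := by
  have h := Id2 hp hT
  have h1 := hp.2.2.2.1 1
  have h2 := hp.1 1
  nlinarith [mul_nonneg (mul_nonneg h2.le (phi5_nonneg hp hT)) (u4_nonneg hp hT),
    mul_nonneg (mul_nonneg h2.le (phi4_nonneg hp hT)) (u5_nonneg hp hT)]

lemma u6_nonneg : 0 ≤ deriv (phi6 p) T := by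
  have h := Id6 hp hT
  have h1 := d6_pos hp hT
  have h2 := phi6_le hp hT
  nlinarith [mul_nonneg (add_nonneg (mul_nonneg (hp.1 5).le (u5_nonneg hp hT))
    (mul_nonneg hp.2.1.le (u2_nonneg hp hT))) (sub_nonneg.2 h2)]

lemma u1_nonneg : 0 ≤ deriv (phi1 p) T := by
  have h := Id1 hp hT
  have h1 := hp.2.2.2.1 0
  nlinarith [mul_nonneg (mul_nonneg (hp.1 0).le (phi6_nonneg hp hT)) (u3_nonneg hp hT),
    mul_nonneg (mul_nonneg (hp.1 0).le (phi3_nonneg hp hT)) (u6_nonneg hp hT)]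

end Ids
@[simp] lemma vec8_five {α : Type*} (a0 a1 a2 a3 a4 a5 a6 a7 : α) :
    ![a0,a1,a2,a3,a4,a5,a6,a7] 5 = a5 := rfl

@[simp] lemma vec8_six {α : Type*} (a0 a1 a2 a3 a4 a5 a6 a7 : α) :
    ![a0,a1,a2,a3,a4,a5,a6,a7] 6 = a6 := rfl

@[simp] lemma vec8_seven {α : Type*} (a0 a1 a2 a3 a4 a5 a6 a7 : α) :
    ![a0,a1,a2,a3,a4,a5,a6,a7] 7 = a7 := rfl

lemma deriv_affine' (f : ℝ → ℝ) (a : ℝ) (h : ∀ t, f t = a * t + f 0) (x : ℝ) :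
    deriv f x = a := by
  have hf : f = fun t => a * t + f 0 := funext h
  rw [hf]
  simpa using (((hasDerivAt_id x).const_mul a).add_const (f 0)).deriv
lemma J00 (p : Params) (τ₁ τ : ℝ) (g : ℝ → ℝ) (v : Fin 8 → ℝ) :
    Jac (Ftau p τ₁ g τ) v 0 0 = -p.h 0 := by
  simp only [Jac, pd]
  refine deriv_affine' _ _ (fun t => ?_) _
  simp [Ftau, Fvec, Function.update_apply]
  try ring

lemma J01 (p : Params) (τ₁ τ : ℝ) (g : ℝ → ℝ) (v : Fin 8 → ℝ) :
    Jac (Ftau p τ₁ g τ) v 0 1 = 0 := by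
  simp only [Jac, pd]
  refine deriv_affine' _ _ (fun t => ?_) _
  simp [Ftau, Fvec, Function.update_apply]
  try ring

lemma J02 (p : Params) (τ₁ τ : ℝ) (g : ℝ → ℝ) (v : Fin 8 → ℝ) :
    Jac (Ftau p τ₁ g τ) v 0 2 = p.k 0 * v 5 := by
  simp only [Jac, pd]
  refine deriv_affine' _ _ (fun t => ?_) _
  simp [Ftau, Fvec, Function.update_apply]
  try ring

lemma J03 (p : Params) (τ₁ τ : ℝ) (g : ℝ → ℝ) (v : Fin 8 → ℝ) :
    Jac (Ftau p τ₁ g τ) v 0 3 = 0 := by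
  simp only [Jac, pd]
  refine deriv_affine' _ _ (fun t => ?_) _
  simp [Ftau, Fvec, Function.update_apply]
  try ring

lemma J04 (p : Params) (τ₁ τ : ℝ) (g : ℝ → ℝ) (v : Fin 8 → ℝ) :
    Jac (Ftau p τ₁ g τ) v 0 4 = 0 := by
  simp only [Jac, pd]
  refine deriv_affine' _ _ (fun t => ?_) _
  simp [Ftau, Fvec, Function.update_apply]
  try ring

lemma J05 (p : Params) (τ₁ τ : ℝ) (g : ℝ → ℝ) (v : Fin 8 → ℝ) :
    Jac (Ftau p τ₁ g τ) v 0 5 = p.k 0 * v 2 := by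
  simp only [Jac, pd]
  refine deriv_affine' _ _ (fun t => ?_) _
  simp [Ftau, Fvec, Function.update_apply]
  try ring

lemma J06 (p : Params) (τ₁ τ : ℝ) (g : ℝ → ℝ) (v : Fin 8 → ℝ) :
    Jac (Ftau p τ₁ g τ) v 0 6 = 0 := by
  simp only [Jac, pd]
  refine deriv_affine' _ _ (fun t => ?_) _
  simp [Ftau, Fvec, Function.update_apply]
  try ring

lemma J07 (p : Params) (τ₁ τ : ℝ) (g : ℝ → ℝ) (v : Fin 8 → ℝ) :
    Jac (Ftau p τ₁ g τ) v 0 7 = 0 := by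
  simp only [Jac, pd]
  refine deriv_affine' _ _ (fun t => ?_) _
  simp [Ftau, Fvec, Function.update_apply]
  try ring

lemma J10 (p : Params) (τ₁ τ : ℝ) (g : ℝ → ℝ) (v : Fin 8 → ℝ) :
    Jac (Ftau p τ₁ g τ) v 1 0 = 0 := by
  simp only [Jac, pd]
  refine deriv_affine' _ _ (fun t => ?_) _
  simp [Ftau, Fvec, Function.update_apply]
  try ring

lemma J11 (p : Params) (τ₁ τ : ℝ) (g : ℝ → ℝ) (v : Fin 8 → ℝ) :
    Jac (Ftau p τ₁ g τ) v 1 1 = -p.h 1 := by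
  simp only [Jac, pd]
  refine deriv_affine' _ _ (fun t => ?_) _
  simp [Ftau, Fvec, Function.update_apply]
  try ring

lemma J12 (p : Params) (τ₁ τ : ℝ) (g : ℝ → ℝ) (v : Fin 8 → ℝ) :
    Jac (Ftau p τ₁ g τ) v 1 2 = 0 := by
  simp only [Jac, pd]
  refine deriv_affine' _ _ (fun t => ?_) _
  simp [Ftau, Fvec, Function.update_apply]
  try ring

lemma J13 (p : Params) (τ₁ τ : ℝ) (g : ℝ → ℝ) (v : Fin 8 → ℝ) :
    Jac (Ftau p τ₁ g τ) v 1 3 = p.k 1 * v 4 := by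
  simp only [Jac, pd]
  refine deriv_affine' _ _ (fun t => ?_) _
  simp [Ftau, Fvec, Function.update_apply]
  try ring

lemma J14 (p : Params) (τ₁ τ : ℝ) (g : ℝ → ℝ) (v : Fin 8 → ℝ) :
    Jac (Ftau p τ₁ g τ) v 1 4 = p.k 1 * v 3 := by
  simp only [Jac, pd]
  refine deriv_affine' _ _ (fun t => ?_) _
  simp [Ftau, Fvec, Function.update_apply]
  try ring

lemma J15 (p : Params) (τ₁ τ : ℝ) (g : ℝ → ℝ) (v : Fin 8 → ℝ) :
    Jac (Ftau p τ₁ g τ) v 1 5 = 0 := by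
  simp only [Jac, pd]
  refine deriv_affine' _ _ (fun t => ?_) _
  simp [Ftau, Fvec, Function.update_apply]
  try ring

lemma J16 (p : Params) (τ₁ τ : ℝ) (g : ℝ → ℝ) (v : Fin 8 → ℝ) :
    Jac (Ftau p τ₁ g τ) v 1 6 = 0 := by
  simp only [Jac, pd]
  refine deriv_affine' _ _ (fun t => ?_) _
  simp [Ftau, Fvec, Function.update_apply]
  try ring

lemma J17 (p : Params) (τ₁ τ : ℝ) (g : ℝ → ℝ) (v : Fin 8 → ℝ) :
    Jac (Ftau p τ₁ g τ) v 1 7 = 0 := by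
  simp only [Jac, pd]
  refine deriv_affine' _ _ (fun t => ?_) _
  simp [Ftau, Fvec, Function.update_apply]
  try ring

lemma J20 (p : Params) (τ₁ τ : ℝ) (g : ℝ → ℝ) (v : Fin 8 → ℝ) :
    Jac (Ftau p τ₁ g τ) v 2 0 = 0 := by
  simp only [Jac, pd]
  refine deriv_affine' _ _ (fun t => ?_) _
  simp [Ftau, Fvec, Function.update_apply]
  try ring

lemma J21 (p : Params) (τ₁ τ : ℝ) (g : ℝ → ℝ) (v : Fin 8 → ℝ) :
    Jac (Ftau p τ₁ g τ) v 2 1 = 0 := by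
  simp only [Jac, pd]
  refine deriv_affine' _ _ (fun t => ?_) _
  simp [Ftau, Fvec, Function.update_apply]
  try ring

lemma J22 (p : Params) (τ₁ τ : ℝ) (g : ℝ → ℝ) (v : Fin 8 → ℝ) :
    Jac (Ftau p τ₁ g τ) v 2 2 = -(p.k 2 * v 7 + p.h 2) := by
  simp only [Jac, pd]
  refine deriv_affine' _ _ (fun t => ?_) _
  simp [Ftau, Fvec, Function.update_apply]
  try ring

lemma J23 (p : Params) (τ₁ τ : ℝ) (g : ℝ → ℝ) (v : Fin 8 → ℝ) :
    Jac (Ftau p τ₁ g τ) v 2 3 = 0 := by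
  simp only [Jac, pd]
  refine deriv_affine' _ _ (fun t => ?_) _
  simp [Ftau, Fvec, Function.update_apply]
  try ring

lemma J24 (p : Params) (τ₁ τ : ℝ) (g : ℝ → ℝ) (v : Fin 8 → ℝ) :
    Jac (Ftau p τ₁ g τ) v 2 4 = 0 := by
  simp only [Jac, pd]
  refine deriv_affine' _ _ (fun t => ?_) _
  simp [Ftau, Fvec, Function.update_apply]
  try ring

lemma J25 (p : Params) (τ₁ τ : ℝ) (g : ℝ → ℝ) (v : Fin 8 → ℝ) :
    Jac (Ftau p τ₁ g τ) v 2 5 = 0 := by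
  simp only [Jac, pd]
  refine deriv_affine' _ _ (fun t => ?_) _
  simp [Ftau, Fvec, Function.update_apply]
  try ring

lemma J26 (p : Params) (τ₁ τ : ℝ) (g : ℝ → ℝ) (v : Fin 8 → ℝ) :
    Jac (Ftau p τ₁ g τ) v 2 6 = 0 := by
  simp only [Jac, pd]
  refine deriv_affine' _ _ (fun t => ?_) _
  simp [Ftau, Fvec, Function.update_apply]
  try ring

lemma J27 (p : Params) (τ₁ τ : ℝ) (g : ℝ → ℝ) (v : Fin 8 → ℝ) :
    Jac (Ftau p τ₁ g τ) v 2 7 = p.k 2 * (p.ρ 2 - v 2) := by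
  simp only [Jac, pd]
  refine deriv_affine' _ _ (fun t => ?_) _
  simp [Ftau, Fvec, Function.update_apply]
  try ring

lemma J30 (p : Params) (τ₁ τ : ℝ) (g : ℝ → ℝ) (v : Fin 8 → ℝ) :
    Jac (Ftau p τ₁ g τ) v 3 0 = 0 := by
  simp only [Jac, pd]
  refine deriv_affine' _ _ (fun t => ?_) _
  simp [Ftau, Fvec, Function.update_apply]
  try ring

lemma J31 (p : Params) (τ₁ τ : ℝ) (g : ℝ → ℝ) (v : Fin 8 → ℝ) :
    Jac (Ftau p τ₁ g τ) v 3 1 = 0 := by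
  simp only [Jac, pd]
  refine deriv_affine' _ _ (fun t => ?_) _
  simp [Ftau, Fvec, Function.update_apply]
  try ring

lemma J32 (p : Params) (τ₁ τ : ℝ) (g : ℝ → ℝ) (v : Fin 8 → ℝ) :
    Jac (Ftau p τ₁ g τ) v 3 2 = 0 := by
  simp only [Jac, pd]
  refine deriv_affine' _ _ (fun t => ?_) _
  simp [Ftau, Fvec, Function.update_apply]
  try ring

lemma J33 (p : Params) (τ₁ τ : ℝ) (g : ℝ → ℝ) (v : Fin 8 → ℝ) :
    Jac (Ftau p τ₁ g τ) v 3 3 = -(p.k 3 * v 7 + p.h 3) := by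
  simp only [Jac, pd]
  refine deriv_affine' _ _ (fun t => ?_) _
  simp [Ftau, Fvec, Function.update_apply]
  try ring

lemma J34 (p : Params) (τ₁ τ : ℝ) (g : ℝ → ℝ) (v : Fin 8 → ℝ) :
    Jac (Ftau p τ₁ g τ) v 3 4 = 0 := by
  simp only [Jac, pd]
  refine deriv_affine' _ _ (fun t => ?_) _
  simp [Ftau, Fvec, Function.update_apply]
  try ring

lemma J35 (p : Params) (τ₁ τ : ℝ) (g : ℝ → ℝ) (v : Fin 8 → ℝ) :
    Jac (Ftau p τ₁ g τ) v 3 5 = 0 := by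
  simp only [Jac, pd]
  refine deriv_affine' _ _ (fun t => ?_) _
  simp [Ftau, Fvec, Function.update_apply]
  try ring

lemma J36 (p : Params) (τ₁ τ : ℝ) (g : ℝ → ℝ) (v : Fin 8 → ℝ) :
    Jac (Ftau p τ₁ g τ) v 3 6 = 0 := by
  simp only [Jac, pd]
  refine deriv_affine' _ _ (fun t => ?_) _
  simp [Ftau, Fvec, Function.update_apply]
  try ring

lemma J37 (p : Params) (τ₁ τ : ℝ) (g : ℝ → ℝ) (v : Fin 8 → ℝ) :
    Jac (Ftau p τ₁ g τ) v 3 7 = p.k 3 * (p.ρ 3 - v 3) := by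
  simp only [Jac, pd]
  refine deriv_affine' _ _ (fun t => ?_) _
  simp [Ftau, Fvec, Function.update_apply]
  try ring

lemma J40 (p : Params) (τ₁ τ : ℝ) (g : ℝ → ℝ) (v : Fin 8 → ℝ) :
    Jac (Ftau p τ₁ g τ) v 4 0 = 0 := by
  simp only [Jac, pd]
  refine deriv_affine' _ _ (fun t => ?_) _
  simp [Ftau, Fvec, Function.update_apply]
  try ring

lemma J41 (p : Params) (τ₁ τ : ℝ) (g : ℝ → ℝ) (v : Fin 8 → ℝ) :
    Jac (Ftau p τ₁ g τ) v 4 1 = 0 := by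
  simp only [Jac, pd]
  refine deriv_affine' _ _ (fun t => ?_) _
  simp [Ftau, Fvec, Function.update_apply]
  try ring

lemma J42 (p : Params) (τ₁ τ : ℝ) (g : ℝ → ℝ) (v : Fin 8 → ℝ) :
    Jac (Ftau p τ₁ g τ) v 4 2 = 0 := by
  simp only [Jac, pd]
  refine deriv_affine' _ _ (fun t => ?_) _
  simp [Ftau, Fvec, Function.update_apply]
  try ring

lemma J43 (p : Params) (τ₁ τ : ℝ) (g : ℝ → ℝ) (v : Fin 8 → ℝ) :
    Jac (Ftau p τ₁ g τ) v 4 3 = 0 := by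
  simp only [Jac, pd]
  refine deriv_affine' _ _ (fun t => ?_) _
  simp [Ftau, Fvec, Function.update_apply]
  try ring

lemma J44 (p : Params) (τ₁ τ : ℝ) (g : ℝ → ℝ) (v : Fin 8 → ℝ) :
    Jac (Ftau p τ₁ g τ) v 4 4 = -(p.k 4 * v 6 + p.h 4) := by
  simp only [Jac, pd]
  refine deriv_affine' _ _ (fun t => ?_) _
  simp [Ftau, Fvec, Function.update_apply]
  try ring

lemma J45 (p : Params) (τ₁ τ : ℝ) (g : ℝ → ℝ) (v : Fin 8 → ℝ) :
    Jac (Ftau p τ₁ g τ) v 4 5 = 0 := by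
  simp only [Jac, pd]
  refine deriv_affine' _ _ (fun t => ?_) _
  simp [Ftau, Fvec, Function.update_apply]
  try ring

lemma J46 (p : Params) (τ₁ τ : ℝ) (g : ℝ → ℝ) (v : Fin 8 → ℝ) :
    Jac (Ftau p τ₁ g τ) v 4 6 = p.k 4 * (p.ρ 4 - v 4) := by
  simp only [Jac, pd]
  refine deriv_affine' _ _ (fun t => ?_) _
  simp [Ftau, Fvec, Function.update_apply]
  try ring

lemma J47 (p : Params) (τ₁ τ : ℝ) (g : ℝ → ℝ) (v : Fin 8 → ℝ) :
    Jac (Ftau p τ₁ g τ) v 4 7 = 0 := by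
  simp only [Jac, pd]
  refine deriv_affine' _ _ (fun t => ?_) _
  simp [Ftau, Fvec, Function.update_apply]
  try ring

lemma J50 (p : Params) (τ₁ τ : ℝ) (g : ℝ → ℝ) (v : Fin 8 → ℝ) :
    Jac (Ftau p τ₁ g τ) v 5 0 = 0 := by
  simp only [Jac, pd]
  refine deriv_affine' _ _ (fun t => ?_) _
  simp [Ftau, Fvec, Function.update_apply]
  try ring

lemma J51 (p : Params) (τ₁ τ : ℝ) (g : ℝ → ℝ) (v : Fin 8 → ℝ) :
    Jac (Ftau p τ₁ g τ) v 5 1 = p.kb6 * (p.ρ 5 - v 5) := by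
  simp only [Jac, pd]
  refine deriv_affine' _ _ (fun t => ?_) _
  simp [Ftau, Fvec, Function.update_apply]
  try ring

lemma J52 (p : Params) (τ₁ τ : ℝ) (g : ℝ → ℝ) (v : Fin 8 → ℝ) :
    Jac (Ftau p τ₁ g τ) v 5 2 = 0 := by
  simp only [Jac, pd]
  refine deriv_affine' _ _ (fun t => ?_) _
  simp [Ftau, Fvec, Function.update_apply]
  try ring

lemma J53 (p : Params) (τ₁ τ : ℝ) (g : ℝ → ℝ) (v : Fin 8 → ℝ) :
    Jac (Ftau p τ₁ g τ) v 5 3 = 0 := by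
  simp only [Jac, pd]
  refine deriv_affine' _ _ (fun t => ?_) _
  simp [Ftau, Fvec, Function.update_apply]
  try ring

lemma J54 (p : Params) (τ₁ τ : ℝ) (g : ℝ → ℝ) (v : Fin 8 → ℝ) :
    Jac (Ftau p τ₁ g τ) v 5 4 = p.k 5 * (p.ρ 5 - v 5) := by
  simp only [Jac, pd]
  refine deriv_affine' _ _ (fun t => ?_) _
  simp [Ftau, Fvec, Function.update_apply]
  try ring

lemma J55 (p : Params) (τ₁ τ : ℝ) (g : ℝ → ℝ) (v : Fin 8 → ℝ) :
    Jac (Ftau p τ₁ g τ) v 5 5 = -(p.k 5 * v 4 + p.kb6 * v 1 + p.h 5) := by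
  simp only [Jac, pd]
  refine deriv_affine' _ _ (fun t => ?_) _
  simp [Ftau, Fvec, Function.update_apply]
  try ring

lemma J56 (p : Params) (τ₁ τ : ℝ) (g : ℝ → ℝ) (v : Fin 8 → ℝ) :
    Jac (Ftau p τ₁ g τ) v 5 6 = 0 := by
  simp only [Jac, pd]
  refine deriv_affine' _ _ (fun t => ?_) _
  simp [Ftau, Fvec, Function.update_apply]
  try ring

lemma J57 (p : Params) (τ₁ τ : ℝ) (g : ℝ → ℝ) (v : Fin 8 → ℝ) :
    Jac (Ftau p τ₁ g τ) v 5 7 = 0 := by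
  simp only [Jac, pd]
  refine deriv_affine' _ _ (fun t => ?_) _
  simp [Ftau, Fvec, Function.update_apply]
  try ring

lemma J60 (p : Params) (τ₁ τ : ℝ) (g : ℝ → ℝ) (v : Fin 8 → ℝ) :
    Jac (Ftau p τ₁ g τ) v 6 0 = 0 := by
  simp only [Jac, pd]
  refine deriv_affine' _ _ (fun t => ?_) _
  simp [Ftau, Fvec, Function.update_apply]
  try ring

lemma J61 (p : Params) (τ₁ τ : ℝ) (g : ℝ → ℝ) (v : Fin 8 → ℝ) :
    Jac (Ftau p τ₁ g τ) v 6 1 = 0 := by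
  simp only [Jac, pd]
  refine deriv_affine' _ _ (fun t => ?_) _
  simp [Ftau, Fvec, Function.update_apply]
  try ring

lemma J62 (p : Params) (τ₁ τ : ℝ) (g : ℝ → ℝ) (v : Fin 8 → ℝ) :
    Jac (Ftau p τ₁ g τ) v 6 2 = 0 := by
  simp only [Jac, pd]
  refine deriv_affine' _ _ (fun t => ?_) _
  simp [Ftau, Fvec, Function.update_apply]
  try ring

lemma J63 (p : Params) (τ₁ τ : ℝ) (g : ℝ → ℝ) (v : Fin 8 → ℝ) :
    Jac (Ftau p τ₁ g τ) v 6 3 = 0 := by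
  simp only [Jac, pd]
  refine deriv_affine' _ _ (fun t => ?_) _
  simp [Ftau, Fvec, Function.update_apply]
  try ring

lemma J64 (p : Params) (τ₁ τ : ℝ) (g : ℝ → ℝ) (v : Fin 8 → ℝ) :
    Jac (Ftau p τ₁ g τ) v 6 4 = 0 := by
  simp only [Jac, pd]
  refine deriv_affine' _ _ (fun t => ?_) _
  simp [Ftau, Fvec, Function.update_apply]
  try ring

lemma J65 (p : Params) (τ₁ τ : ℝ) (g : ℝ → ℝ) (v : Fin 8 → ℝ) :
    Jac (Ftau p τ₁ g τ) v 6 5 = 0 := by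
  simp only [Jac, pd]
  refine deriv_affine' _ _ (fun t => ?_) _
  simp [Ftau, Fvec, Function.update_apply]
  try ring

lemma J66 (p : Params) (τ₁ τ : ℝ) (g : ℝ → ℝ) (v : Fin 8 → ℝ) :
    Jac (Ftau p τ₁ g τ) v 6 6 = -(p.k 6 * v 7 + p.h 6) := by
  simp only [Jac, pd]
  refine deriv_affine' _ _ (fun t => ?_) _
  simp [Ftau, Fvec, Function.update_apply]
  try ring

lemma J67 (p : Params) (τ₁ τ : ℝ) (g : ℝ → ℝ) (v : Fin 8 → ℝ) :
    Jac (Ftau p τ₁ g τ) v 6 7 = p.k 6 * (p.ρ 6 - v 6) := by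
  simp only [Jac, pd]
  refine deriv_affine' _ _ (fun t => ?_) _
  simp [Ftau, Fvec, Function.update_apply]
  try ring

lemma J70 (p : Params) (τ₁ τ : ℝ) (g : ℝ → ℝ) (v : Fin 8 → ℝ) :
    Jac (Ftau p τ₁ g τ) v 7 0 = (if τ < τ₁ then (1:ℝ) else (1 - τ) / (1 - τ₁)) * (p.kb8 * (p.ρ 7 - v 7)) := by
  by_cases hτ : τ < τ₁ <;>
    [skip; skip] <;>
    (simp only [Jac, pd]
     refine deriv_affine' _ _ (fun t => ?_) _
     simp [Ftau, Fvec, Function.update_apply, hτ]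
     try ring)

lemma J71 (p : Params) (τ₁ τ : ℝ) (g : ℝ → ℝ) (v : Fin 8 → ℝ) :
    Jac (Ftau p τ₁ g τ) v 7 1 = 0 := by
  by_cases hτ : τ < τ₁ <;>
    [skip; skip] <;>
    (simp only [Jac, pd]
     refine deriv_affine' _ _ (fun t => ?_) _
     simp [Ftau, Fvec, Function.update_apply, hτ]
     try ring)

lemma J72 (p : Params) (τ₁ τ : ℝ) (g : ℝ → ℝ) (v : Fin 8 → ℝ) :
    Jac (Ftau p τ₁ g τ) v 7 2 = 0 := by
  by_cases hτ : τ < τ₁ <;>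
    [skip; skip] <;>
    (simp only [Jac, pd]
     refine deriv_affine' _ _ (fun t => ?_) _
     simp [Ftau, Fvec, Function.update_apply, hτ]
     try ring)

lemma J73 (p : Params) (τ₁ τ : ℝ) (g : ℝ → ℝ) (v : Fin 8 → ℝ) :
    Jac (Ftau p τ₁ g τ) v 7 3 = 0 := by
  by_cases hτ : τ < τ₁ <;>
    [skip; skip] <;>
    (simp only [Jac, pd]
     refine deriv_affine' _ _ (fun t => ?_) _
     simp [Ftau, Fvec, Function.update_apply, hτ]
     try ring)

lemma J74 (p : Params) (τ₁ τ : ℝ) (g : ℝ → ℝ) (v : Fin 8 → ℝ) :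
    Jac (Ftau p τ₁ g τ) v 7 4 = 0 := by
  by_cases hτ : τ < τ₁ <;>
    [skip; skip] <;>
    (simp only [Jac, pd]
     refine deriv_affine' _ _ (fun t => ?_) _
     simp [Ftau, Fvec, Function.update_apply, hτ]
     try ring)

lemma J75 (p : Params) (τ₁ τ : ℝ) (g : ℝ → ℝ) (v : Fin 8 → ℝ) :
    Jac (Ftau p τ₁ g τ) v 7 5 = (if τ < τ₁ then (1:ℝ) else (1 - τ) / (1 - τ₁)) * (p.k 7 * (p.ρ 7 - v 7)) := by
  by_cases hτ : τ < τ₁ <;>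
    [skip; skip] <;>
    (simp only [Jac, pd]
     refine deriv_affine' _ _ (fun t => ?_) _
     simp [Ftau, Fvec, Function.update_apply, hτ]
     try ring)

lemma J76 (p : Params) (τ₁ τ : ℝ) (g : ℝ → ℝ) (v : Fin 8 → ℝ) :
    Jac (Ftau p τ₁ g τ) v 7 6 = 0 := by
  by_cases hτ : τ < τ₁ <;>
    [skip; skip] <;>
    (simp only [Jac, pd]
     refine deriv_affine' _ _ (fun t => ?_) _
     simp [Ftau, Fvec, Function.update_apply, hτ]
     try ring)


lemma J77 (p : Params) (τ₁ τ : ℝ) (g : ℝ → ℝ) (v : Fin 8 → ℝ)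
    (hPd : DifferentiableAt ℝ (Ppoly p) (v 7)) (hgd : DifferentiableAt ℝ g (v 7)) :
    Jac (Ftau p τ₁ g τ) v 7 7 =
      (if τ < τ₁ then (1:ℝ) else (1 - τ) / (1 - τ₁)) * (-(p.k 7 * v 5 + p.kb8 * v 0 + p.h 7))
      + (if τ < τ₁ then (0:ℝ) else (τ - τ₁) / (1 - τ₁)) * deriv (Ppoly p) (v 7)
      + (if τ < τ₁ then τ else τ₁) * deriv g (v 7) := by
  have hF : HasDerivAt (fun t : ℝ => (p.k 7 * v 5 + p.kb8 * v 0) * (p.ρ 7 - t) - p.h 7 * t)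
      (-(p.k 7 * v 5 + p.kb8 * v 0 + p.h 7)) (v 7) := by
    have h1 : HasDerivAt (fun t : ℝ => p.ρ 7 - t) (-1) (v 7) := by
      simpa using (hasDerivAt_id (v 7)).const_sub (p.ρ 7)
    have h2 := h1.const_mul (p.k 7 * v 5 + p.kb8 * v 0)
    have h3 : HasDerivAt (fun t : ℝ => p.h 7 * t) (p.h 7) (v 7) := by
      simpa using (hasDerivAt_id (v 7)).const_mul (p.h 7)
    have h4 := h2.sub h3
    exact h4.congr_deriv (by ring)
  have hD : HasDerivAt
      (fun t => (if τ < τ₁ then (1:ℝ) else (1 - τ) / (1 - τ₁)) *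
          ((p.k 7 * v 5 + p.kb8 * v 0) * (p.ρ 7 - t) - p.h 7 * t)
        + (if τ < τ₁ then (0:ℝ) else (τ - τ₁) / (1 - τ₁)) * Ppoly p t
        + (if τ < τ₁ then τ else τ₁) * g t)
      ((if τ < τ₁ then (1:ℝ) else (1 - τ) / (1 - τ₁)) * (-(p.k 7 * v 5 + p.kb8 * v 0 + p.h 7))
        + (if τ < τ₁ then (0:ℝ) else (τ - τ₁) / (1 - τ₁)) * deriv (Ppoly p) (v 7)
        + (if τ < τ₁ then τ else τ₁) * deriv g (v 7)) (v 7) :=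
    ((hF.const_mul _).add (hPd.hasDerivAt.const_mul _)).add (hgd.hasDerivAt.const_mul _)
  have hfun : (fun t => Ftau p τ₁ g τ (Function.update v 7 t) 7)
      = (fun t => (if τ < τ₁ then (1:ℝ) else (1 - τ) / (1 - τ₁)) *
          ((p.k 7 * v 5 + p.kb8 * v 0) * (p.ρ 7 - t) - p.h 7 * t)
        + (if τ < τ₁ then (0:ℝ) else (τ - τ₁) / (1 - τ₁)) * Ppoly p t
        + (if τ < τ₁ then τ else τ₁) * g t) := by
    funext t
    by_cases hτ : τ < τ₁ <;> simp [Ftau, Fvec, Function.update_apply, hτ] <;> ring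
  simp only [Jac, pd, hfun]
  exact hD.deriv
@[simp] lemma Pvec0 (p : Params) (T : ℝ) : phivec p T 0 = phi1 p T := rfl
@[simp] lemma Pvec1 (p : Params) (T : ℝ) : phivec p T 1 = phi2 p T := rfl
@[simp] lemma Pvec2 (p : Params) (T : ℝ) : phivec p T 2 = phi3 p T := rfl
@[simp] lemma Pvec3 (p : Params) (T : ℝ) : phivec p T 3 = phi4 p T := rfl
@[simp] lemma Pvec4 (p : Params) (T : ℝ) : phivec p T 4 = phi5 p T := rfl
@[simp] lemma Pvec5 (p : Params) (T : ℝ) : phivec p T 5 = phi6 p T := rfl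
@[simp] lemma Pvec6 (p : Params) (T : ℝ) : phivec p T 6 = phi7 p T := rfl
@[simp] lemma Pvec7 (p : Params) (T : ℝ) : phivec p T 7 = T := rfl

set_option maxHeartbeats 1600000 in
lemma stable_aux (hp : p.Pos) (τ₁ τ : ℝ) (g : ℝ → ℝ) (hτ0 : 0 ≤ τ) (hτle : τ ≤ 1)
    (hτ₁0 : 0 < τ₁) (hτ₁1 : τ₁ < 1) (hgd : Differentiable ℝ g) {T : ℝ} (hT : 0 ≤ T)
    (hTρ : T ≤ p.ρ 7) (hg' : deriv g T = 0) (hP' : deriv (Ppoly p) T < 0) :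
    ∀ lam : ℂ, IsEig (Jac (Ftau p τ₁ g τ) (phivec p T)) lam → lam.re < 0 := by
  rintro lam ⟨x, hxne, hEig⟩
  by_contra hre
  push_neg at hre
  have hA0 : 0 ≤ (if τ < τ₁ then (1:ℝ) else (1 - τ) / (1 - τ₁)) := by
    split
    · norm_num
    · exact div_nonneg (by linarith) (by linarith)
  have hB0 : 0 ≤ (if τ < τ₁ then (0:ℝ) else (τ - τ₁) / (1 - τ₁)) := by
    split
    · norm_num
    · next h => exact div_nonneg (by push_neg at h; linarith) (by linarith)
  have hAB : (if τ < τ₁ then (1:ℝ) else (1 - τ) / (1 - τ₁))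
      + (if τ < τ₁ then (0:ℝ) else (τ - τ₁) / (1 - τ₁)) = 1 := by
    split
    · norm_num
    · rw [← add_div]
      rw [show (1 - τ) + (τ - τ₁) = 1 - τ₁ by ring]
      exact div_self (by linarith)
  have hPd : DifferentiableAt ℝ (Ppoly p) (phivec p T 7) := by
    rw [Pvec7]; exact diff_Ppoly hp hT
  have hgd7 : DifferentiableAt ℝ g (phivec p T 7) := hgd _
  have E0 := congrFun hEig 0
  have E1 := congrFun hEig 1
  have E2 := congrFun hEig 2
  have E3 := congrFun hEig 3
  have E4 := congrFun hEig 4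
  have E5 := congrFun hEig 5
  have E6 := congrFun hEig 6
  have E7 := congrFun hEig 7
  simp only [Matrix.mulVec, dotProduct, Fin.sum_univ_eight, Matrix.map_apply,
    Pi.smul_apply, smul_eq_mul,
    J00, J01, J02, J03, J04, J05, J06, J07, J10, J11, J12, J13, J14, J15, J16, J17,
    J20, J21, J22, J23, J24, J25, J26, J27, J30, J31, J32, J33, J34, J35, J36, J37,
    J40, J41, J42, J43, J44, J45, J46, J47, J50, J51, J52, J53, J54, J55, J56, J57,
    J60, J61, J62, J63, J64, J65, J66, J67, J70, J71, J72, J73, J74, J75, J76,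
    J77 p τ₁ τ g (phivec p T) hPd hgd7,
    Pvec0, Pvec1, Pvec2, Pvec3, Pvec4, Pvec5, Pvec6, Pvec7, hg',
    Complex.ofReal_zero, zero_mul, add_zero, zero_add, mul_zero]
    at E0 E1 E2 E3 E4 E5 E6 E7
  -- normalized equations
  have hx2 : (lam + ((p.k 2 * T + p.h 2 : ℝ) : ℂ)) * x 2
      = ((p.k 2 * (p.ρ 2 - phi3 p T) : ℝ) : ℂ) * x 7 := by
    push_cast at E2 ⊢; linear_combination -E2
  have hx3 : (lam + ((p.k 3 * T + p.h 3 : ℝ) : ℂ)) * x 3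
      = ((p.k 3 * (p.ρ 3 - phi4 p T) : ℝ) : ℂ) * x 7 := by
    push_cast at E3 ⊢; linear_combination -E3
  have hx6 : (lam + ((p.k 6 * T + p.h 6 : ℝ) : ℂ)) * x 6
      = ((p.k 6 * (p.ρ 6 - phi7 p T) : ℝ) : ℂ) * x 7 := by
    push_cast at E6 ⊢; linear_combination -E6
  have hx4 : (lam + ((p.k 4 * phi7 p T + p.h 4 : ℝ) : ℂ)) * x 4
      = ((p.k 4 * (p.ρ 4 - phi5 p T) : ℝ) : ℂ) * x 6 := by
    push_cast at E4 ⊢; linear_combination -E4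
  have hx1 : (lam + ((p.h 1 : ℝ) : ℂ)) * x 1
      = ((p.k 1 * phi5 p T : ℝ) : ℂ) * x 3 + ((p.k 1 * phi4 p T : ℝ) : ℂ) * x 4 := by
    push_cast at E1 ⊢; linear_combination -E1
  have hx5 : (lam + ((p.k 5 * phi5 p T + p.kb6 * phi2 p T + p.h 5 : ℝ) : ℂ)) * x 5
      = ((p.kb6 * (p.ρ 5 - phi6 p T) : ℝ) : ℂ) * x 1
        + ((p.k 5 * (p.ρ 5 - phi6 p T) : ℝ) : ℂ) * x 4 := by
    push_cast at E5 ⊢; linear_combination -E5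
  have hx0 : (lam + ((p.h 0 : ℝ) : ℂ)) * x 0
      = ((p.k 0 * phi6 p T : ℝ) : ℂ) * x 2 + ((p.k 0 * phi3 p T : ℝ) : ℂ) * x 5 := by
    push_cast at E0 ⊢; linear_combination -E0
  have hx7 : (lam - (((if τ < τ₁ then (1:ℝ) else (1 - τ) / (1 - τ₁))
        * (-(p.k 7 * phi6 p T + p.kb8 * phi1 p T + p.h 7))
        + (if τ < τ₁ then (0:ℝ) else (τ - τ₁) / (1 - τ₁)) * deriv (Ppoly p) T : ℝ) : ℂ)) * x 7
      = (((if τ < τ₁ then (1:ℝ) else (1 - τ) / (1 - τ₁)) * (p.kb8 * (p.ρ 7 - T)) : ℝ) : ℂ) * x 0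
        + (((if τ < τ₁ then (1:ℝ) else (1 - τ) / (1 - τ₁)) * (p.k 7 * (p.ρ 7 - T)) : ℝ) : ℂ) * x 5 := by
    push_cast at E7 ⊢; linear_combination -E7
  -- basic complex helpers
  have hne : ∀ d : ℝ, 0 < d → lam + (d : ℂ) ≠ 0 := by
    intro d hd h
    have h2 := congrArg Complex.re h
    simp only [Complex.add_re, Complex.ofReal_re, Complex.zero_re] at h2
    linarith only [h2, hd, hre]
  have hkey : ∀ (d : ℝ) (z w : ℂ), 0 < d → (lam + (d : ℂ)) * z = w → d * ‖z‖ ≤ ‖w‖ := by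
    intro d z w hd h
    have h2 : (lam + (d : ℂ)).re ≤ ‖lam + (d : ℂ)‖ := Complex.re_le_norm _
    have h3 : d ≤ ‖lam + (d : ℂ)‖ := by
      simp only [Complex.add_re, Complex.ofReal_re] at h2
      linarith only [h2, hre]
    calc d * ‖z‖ ≤ ‖lam + (d : ℂ)‖ * ‖z‖ := mul_le_mul_of_nonneg_right h3 (norm_nonneg _)
      _ = ‖w‖ := by rw [← norm_mul, h]
  have hcast : ∀ (a : ℝ) (z : ℂ), 0 ≤ a → ‖(a : ℂ) * z‖ = a * ‖z‖ := by
    intro a z ha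
    rw [norm_mul, Complex.norm_real, Real.norm_eq_abs, abs_of_nonneg ha]
  -- nonnegativity of coefficients
  have ha2 : 0 ≤ p.k 2 * (p.ρ 2 - phi3 p T) :=
    mul_nonneg (hp.1 2).le (sub_nonneg.2 (phi3_le hp hT))
  have ha3 : 0 ≤ p.k 3 * (p.ρ 3 - phi4 p T) :=
    mul_nonneg (hp.1 3).le (sub_nonneg.2 (phi4_le hp hT))
  have ha6 : 0 ≤ p.k 6 * (p.ρ 6 - phi7 p T) :=
    mul_nonneg (hp.1 6).le (sub_nonneg.2 (phi7_le hp hT))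
  have ha4 : 0 ≤ p.k 4 * (p.ρ 4 - phi5 p T) :=
    mul_nonneg (hp.1 4).le (sub_nonneg.2 (phi5_le hp hT))
  have hb13 : 0 ≤ p.k 1 * phi5 p T := mul_nonneg (hp.1 1).le (phi5_nonneg hp hT)
  have hb14 : 0 ≤ p.k 1 * phi4 p T := mul_nonneg (hp.1 1).le (phi4_nonneg hp hT)
  have hb51 : 0 ≤ p.kb6 * (p.ρ 5 - phi6 p T) :=
    mul_nonneg hp.2.1.le (sub_nonneg.2 (phi6_le hp hT))
  have hb54 : 0 ≤ p.k 5 * (p.ρ 5 - phi6 p T) :=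
    mul_nonneg (hp.1 5).le (sub_nonneg.2 (phi6_le hp hT))
  have hb02 : 0 ≤ p.k 0 * phi6 p T := mul_nonneg (hp.1 0).le (phi6_nonneg hp hT)
  have hb05 : 0 ≤ p.k 0 * phi3 p T := mul_nonneg (hp.1 0).le (phi3_nonneg hp hT)
  have hc0 : 0 ≤ p.kb8 * (p.ρ 7 - T) := mul_nonneg hp.2.2.1.le (by linarith)
  have hc5 : 0 ≤ p.k 7 * (p.ρ 7 - T) := mul_nonneg (hp.1 7).le (by linarith)
  -- identities
  have I1 := Id1 hp hT
  have I2 := Id2 hp hT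
  have I3 := Id3 hp hT
  have I4 := Id4 hp hT
  have I5 := Id5 hp hT
  have I6 := Id6 hp hT
  have I7 := Id7 hp hT
  have IP := IdP hp hT
  have un3 := u3_nonneg hp hT
  have un4 := u4_nonneg hp hT
  have un7 := u7_nonneg hp hT
  have un5 := u5_nonneg hp hT
  have un2 := u2_nonneg hp hT
  have un6 := u6_nonneg hp hT
  have un1 := u1_nonneg hp hT
  -- norm bounds  (component i of x vs deriv of corresponding phi)
  have n2 : ‖x 2‖ ≤ deriv (phi3 p) T * ‖x 7‖ := by
    have h := hkey _ _ _ (d3_pos hp hT) hx2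
    rw [hcast _ _ ha2, ← I3, mul_assoc] at h
    exact le_of_mul_le_mul_left h (d3_pos hp hT)
  have n3 : ‖x 3‖ ≤ deriv (phi4 p) T * ‖x 7‖ := by
    have h := hkey _ _ _ (d4_pos hp hT) hx3
    rw [hcast _ _ ha3, ← I4, mul_assoc] at h
    exact le_of_mul_le_mul_left h (d4_pos hp hT)
  have n6 : ‖x 6‖ ≤ deriv (phi7 p) T * ‖x 7‖ := by
    have h := hkey _ _ _ (d7_pos hp hT) hx6
    rw [hcast _ _ ha6, ← I7, mul_assoc] at h
    exact le_of_mul_le_mul_left h (d7_pos hp hT)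
  have n4 : ‖x 4‖ ≤ deriv (phi5 p) T * ‖x 7‖ := by
    have h := hkey _ _ _ (d5_pos hp hT) hx4
    rw [hcast _ _ ha4] at h
    have h2 := mul_le_mul_of_nonneg_left n6 ha4
    have hfin : (p.k 4 * phi7 p T + p.h 4) * ‖x 4‖
        ≤ (p.k 4 * phi7 p T + p.h 4) * (deriv (phi5 p) T * ‖x 7‖) := by
      nlinarith only [h, h2, I5, norm_nonneg (x 7)]
    exact le_of_mul_le_mul_left hfin (d5_pos hp hT)
  have n1 : ‖x 1‖ ≤ deriv (phi2 p) T * ‖x 7‖ := by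
    have h := hkey _ _ _ (hp.2.2.2.1 1) hx1
    have htr : ‖((p.k 1 * phi5 p T : ℝ) : ℂ) * x 3 + ((p.k 1 * phi4 p T : ℝ) : ℂ) * x 4‖
        ≤ p.k 1 * phi5 p T * ‖x 3‖ + p.k 1 * phi4 p T * ‖x 4‖ := by
      calc _ ≤ ‖((p.k 1 * phi5 p T : ℝ) : ℂ) * x 3‖ + ‖((p.k 1 * phi4 p T : ℝ) : ℂ) * x 4‖ :=
            norm_add_le _ _
        _ = _ := by rw [hcast _ _ hb13, hcast _ _ hb14]
    have h3 := mul_le_mul_of_nonneg_left n3 hb13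
    have h4 := mul_le_mul_of_nonneg_left n4 hb14
    have hfin : p.h 1 * ‖x 1‖ ≤ p.h 1 * (deriv (phi2 p) T * ‖x 7‖) := by
      nlinarith only [h, htr, h3, h4, I2, norm_nonneg (x 7)]
    exact le_of_mul_le_mul_left hfin (hp.2.2.2.1 1)
  have n5 : ‖x 5‖ ≤ deriv (phi6 p) T * ‖x 7‖ := by
    have h := hkey _ _ _ (d6_pos hp hT) hx5
    have htr : ‖((p.kb6 * (p.ρ 5 - phi6 p T) : ℝ) : ℂ) * x 1
          + ((p.k 5 * (p.ρ 5 - phi6 p T) : ℝ) : ℂ) * x 4‖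
        ≤ p.kb6 * (p.ρ 5 - phi6 p T) * ‖x 1‖ + p.k 5 * (p.ρ 5 - phi6 p T) * ‖x 4‖ := by
      calc _ ≤ ‖((p.kb6 * (p.ρ 5 - phi6 p T) : ℝ) : ℂ) * x 1‖
            + ‖((p.k 5 * (p.ρ 5 - phi6 p T) : ℝ) : ℂ) * x 4‖ := norm_add_le _ _
        _ = _ := by rw [hcast _ _ hb51, hcast _ _ hb54]
    have h1 := mul_le_mul_of_nonneg_left n1 hb51
    have h4 := mul_le_mul_of_nonneg_left n4 hb54
    have hfin : (p.k 5 * phi5 p T + p.kb6 * phi2 p T + p.h 5) * ‖x 5‖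
        ≤ (p.k 5 * phi5 p T + p.kb6 * phi2 p T + p.h 5) * (deriv (phi6 p) T * ‖x 7‖) := by
      nlinarith only [h, htr, h1, h4, I6, norm_nonneg (x 7)]
    exact le_of_mul_le_mul_left hfin (d6_pos hp hT)
  have n0 : ‖x 0‖ ≤ deriv (phi1 p) T * ‖x 7‖ := by
    have h := hkey _ _ _ (hp.2.2.2.1 0) hx0
    have htr : ‖((p.k 0 * phi6 p T : ℝ) : ℂ) * x 2 + ((p.k 0 * phi3 p T : ℝ) : ℂ) * x 5‖
        ≤ p.k 0 * phi6 p T * ‖x 2‖ + p.k 0 * phi3 p T * ‖x 5‖ := by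
      calc _ ≤ ‖((p.k 0 * phi6 p T : ℝ) : ℂ) * x 2‖ + ‖((p.k 0 * phi3 p T : ℝ) : ℂ) * x 5‖ :=
            norm_add_le _ _
        _ = _ := by rw [hcast _ _ hb02, hcast _ _ hb05]
    have h2 := mul_le_mul_of_nonneg_left n2 hb02
    have h5 := mul_le_mul_of_nonneg_left n5 hb05
    have hfin : p.h 0 * ‖x 0‖ ≤ p.h 0 * (deriv (phi1 p) T * ‖x 7‖) := by
      nlinarith only [h, htr, h2, h5, I1, norm_nonneg (x 7)]
    exact le_of_mul_le_mul_left hfin (hp.2.2.2.1 0)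
  -- x 7 ≠ 0
  have hx7ne : x 7 ≠ 0 := by
    intro h7
    have z2 : x 2 = 0 := by
      rw [h7, mul_zero] at hx2
      exact (mul_eq_zero.1 hx2).resolve_left (hne _ (d3_pos hp hT))
    have z3 : x 3 = 0 := by
      rw [h7, mul_zero] at hx3
      exact (mul_eq_zero.1 hx3).resolve_left (hne _ (d4_pos hp hT))
    have z6 : x 6 = 0 := by
      rw [h7, mul_zero] at hx6
      exact (mul_eq_zero.1 hx6).resolve_left (hne _ (d7_pos hp hT))
    have z4 : x 4 = 0 := by
      rw [z6, mul_zero] at hx4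
      exact (mul_eq_zero.1 hx4).resolve_left (hne _ (d5_pos hp hT))
    have z1 : x 1 = 0 := by
      rw [z3, z4, mul_zero, mul_zero, add_zero] at hx1
      exact (mul_eq_zero.1 hx1).resolve_left (hne _ (hp.2.2.2.1 1))
    have z5 : x 5 = 0 := by
      rw [z1, z4, mul_zero, mul_zero, add_zero] at hx5
      exact (mul_eq_zero.1 hx5).resolve_left (hne _ (d6_pos hp hT))
    have z0 : x 0 = 0 := by
      rw [z2, z5, mul_zero, mul_zero, add_zero] at hx0
      exact (mul_eq_zero.1 hx0).resolve_left (hne _ (hp.2.2.2.1 0))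
    apply hxne
    funext i
    fin_cases i <;> simp only [Pi.zero_apply]
    exacts [z0, z1, z2, z3, z4, z5, z6, h7]
  -- final estimate from row 7
  have key7 := congrArg norm hx7
  rw [norm_mul] at key7
  have hAc0 : 0 ≤ (if τ < τ₁ then (1:ℝ) else (1 - τ) / (1 - τ₁)) * (p.kb8 * (p.ρ 7 - T)) :=
    mul_nonneg hA0 hc0
  have hAc5 : 0 ≤ (if τ < τ₁ then (1:ℝ) else (1 - τ) / (1 - τ₁)) * (p.k 7 * (p.ρ 7 - T)) :=
    mul_nonneg hA0 hc5
  have htr : ‖(((if τ < τ₁ then (1:ℝ) else (1 - τ) / (1 - τ₁)) * (p.kb8 * (p.ρ 7 - T)) : ℝ) : ℂ) * x 0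
        + (((if τ < τ₁ then (1:ℝ) else (1 - τ) / (1 - τ₁)) * (p.k 7 * (p.ρ 7 - T)) : ℝ) : ℂ) * x 5‖
      ≤ (if τ < τ₁ then (1:ℝ) else (1 - τ) / (1 - τ₁)) * (p.kb8 * (p.ρ 7 - T)) * ‖x 0‖
        + (if τ < τ₁ then (1:ℝ) else (1 - τ) / (1 - τ₁)) * (p.k 7 * (p.ρ 7 - T)) * ‖x 5‖ := by
    calc _ ≤ ‖(((if τ < τ₁ then (1:ℝ) else (1 - τ) / (1 - τ₁)) * (p.kb8 * (p.ρ 7 - T)) : ℝ) : ℂ) * x 0‖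
          + ‖(((if τ < τ₁ then (1:ℝ) else (1 - τ) / (1 - τ₁)) * (p.k 7 * (p.ρ 7 - T)) : ℝ) : ℂ) * x 5‖ :=
          norm_add_le _ _
      _ = _ := by rw [hcast _ _ hAc0, hcast _ _ hAc5]
  have hxpos : 0 < ‖x 7‖ := norm_pos_iff.2 hx7ne
  have h0' := mul_le_mul_of_nonneg_left n0 hAc0
  have h5' := mul_le_mul_of_nonneg_left n5 hAc5
  have hnrm : ‖lam - (((if τ < τ₁ then (1:ℝ) else (1 - τ) / (1 - τ₁))
        * (-(p.k 7 * phi6 p T + p.kb8 * phi1 p T + p.h 7))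
        + (if τ < τ₁ then (0:ℝ) else (τ - τ₁) / (1 - τ₁)) * deriv (Ppoly p) T : ℝ) : ℂ)‖
      ≤ (if τ < τ₁ then (1:ℝ) else (1 - τ) / (1 - τ₁)) * (p.kb8 * (p.ρ 7 - T)) * deriv (phi1 p) T
        + (if τ < τ₁ then (1:ℝ) else (1 - τ) / (1 - τ₁)) * (p.k 7 * (p.ρ 7 - T)) * deriv (phi6 p) T := by
    have hcomb : ‖lam - (((if τ < τ₁ then (1:ℝ) else (1 - τ) / (1 - τ₁))
        * (-(p.k 7 * phi6 p T + p.kb8 * phi1 p T + p.h 7))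
        + (if τ < τ₁ then (0:ℝ) else (τ - τ₁) / (1 - τ₁)) * deriv (Ppoly p) T : ℝ) : ℂ)‖ * ‖x 7‖
        ≤ ((if τ < τ₁ then (1:ℝ) else (1 - τ) / (1 - τ₁)) * (p.kb8 * (p.ρ 7 - T)) * deriv (phi1 p) T
          + (if τ < τ₁ then (1:ℝ) else (1 - τ) / (1 - τ₁)) * (p.k 7 * (p.ρ 7 - T)) * deriv (phi6 p) T) * ‖x 7‖ := by
      rw [key7]
      calc _ ≤ _ := htr
        _ ≤ _ := by nlinarith only [h0', h5']
    exact le_of_mul_le_mul_right hcomb hxpos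
  have hre2 : lam.re - ((if τ < τ₁ then (1:ℝ) else (1 - τ) / (1 - τ₁))
        * (-(p.k 7 * phi6 p T + p.kb8 * phi1 p T + p.h 7))
        + (if τ < τ₁ then (0:ℝ) else (τ - τ₁) / (1 - τ₁)) * deriv (Ppoly p) T)
      ≤ ‖lam - (((if τ < τ₁ then (1:ℝ) else (1 - τ) / (1 - τ₁))
        * (-(p.k 7 * phi6 p T + p.kb8 * phi1 p T + p.h 7))
        + (if τ < τ₁ then (0:ℝ) else (τ - τ₁) / (1 - τ₁)) * deriv (Ppoly p) T : ℝ) : ℂ)‖ := by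
    have h2 := Complex.re_le_norm (lam - (((if τ < τ₁ then (1:ℝ) else (1 - τ) / (1 - τ₁))
        * (-(p.k 7 * phi6 p T + p.kb8 * phi1 p T + p.h 7))
        + (if τ < τ₁ then (0:ℝ) else (τ - τ₁) / (1 - τ₁)) * deriv (Ppoly p) T : ℝ) : ℂ))
    simpa [Complex.sub_re, Complex.ofReal_re] using h2
  have hident : ((if τ < τ₁ then (1:ℝ) else (1 - τ) / (1 - τ₁))
        * (-(p.k 7 * phi6 p T + p.kb8 * phi1 p T + p.h 7))
        + (if τ < τ₁ then (0:ℝ) else (τ - τ₁) / (1 - τ₁)) * deriv (Ppoly p) T)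
      + ((if τ < τ₁ then (1:ℝ) else (1 - τ) / (1 - τ₁)) * (p.kb8 * (p.ρ 7 - T)) * deriv (phi1 p) T
        + (if τ < τ₁ then (1:ℝ) else (1 - τ) / (1 - τ₁)) * (p.k 7 * (p.ρ 7 - T)) * deriv (phi6 p) T)
      = deriv (Ppoly p) T := by
    linear_combination (-(if τ < τ₁ then (1:ℝ) else (1 - τ) / (1 - τ₁))) * IP
      + deriv (Ppoly p) T * hAB
  linarith only [hre, hre2, hnrm, hident, hP']
def q2 (p : Params) (T l : ℝ) : ℝ := p.k 2 * (p.ρ 2 - phi3 p T) / (l + (p.k 2 * T + p.h 2))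
def q3 (p : Params) (T l : ℝ) : ℝ := p.k 3 * (p.ρ 3 - phi4 p T) / (l + (p.k 3 * T + p.h 3))
def q6 (p : Params) (T l : ℝ) : ℝ := p.k 6 * (p.ρ 6 - phi7 p T) / (l + (p.k 6 * T + p.h 6))
def q4 (p : Params) (T l : ℝ) : ℝ :=
  p.k 4 * (p.ρ 4 - phi5 p T) * q6 p T l / (l + (p.k 4 * phi7 p T + p.h 4))
def q1 (p : Params) (T l : ℝ) : ℝ :=
  (p.k 1 * phi5 p T * q3 p T l + p.k 1 * phi4 p T * q4 p T l) / (l + p.h 1)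
def q5 (p : Params) (T l : ℝ) : ℝ :=
  (p.kb6 * (p.ρ 5 - phi6 p T) * q1 p T l + p.k 5 * (p.ρ 5 - phi6 p T) * q4 p T l) /
    (l + (p.k 5 * phi5 p T + p.kb6 * phi2 p T + p.h 5))
def q0 (p : Params) (T l : ℝ) : ℝ :=
  (p.k 0 * phi6 p T * q2 p T l + p.k 0 * phi3 p T * q5 p T l) / (l + p.h 0)

def Hfun (p : Params) (τ₁ τ T : ℝ) : ℝ → ℝ := fun l =>
  (if τ < τ₁ then (1:ℝ) else (1 - τ) / (1 - τ₁)) *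
      (p.kb8 * (p.ρ 7 - T) * q0 p T l + p.k 7 * (p.ρ 7 - T) * q5 p T l)
    + ((if τ < τ₁ then (1:ℝ) else (1 - τ) / (1 - τ₁)) *
        (-(p.k 7 * phi6 p T + p.kb8 * phi1 p T + p.h 7))
      + (if τ < τ₁ then (0:ℝ) else (τ - τ₁) / (1 - τ₁)) * deriv (Ppoly p) T)

section Qs

variable (hp : p.Pos) {T : ℝ} (hT : 0 ≤ T)
include hp hT

lemma qden_pos {l d : ℝ} (hl : 0 ≤ l) (hd : 0 < d) : 0 < l + d := by linarith

lemma cont_q2 : ContinuousOn (q2 p T) (Set.Ici 0) := by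
  apply ContinuousOn.div continuousOn_const (by fun_prop)
  intro l hl
  exact (qden_pos hp hT hl (d3_pos hp hT)).ne'

lemma cont_q3 : ContinuousOn (q3 p T) (Set.Ici 0) := by
  apply ContinuousOn.div continuousOn_const (by fun_prop)
  intro l hl
  exact (qden_pos hp hT hl (d4_pos hp hT)).ne'

lemma cont_q6 : ContinuousOn (q6 p T) (Set.Ici 0) := by
  apply ContinuousOn.div continuousOn_const (by fun_prop)
  intro l hl
  exact (qden_pos hp hT hl (d7_pos hp hT)).ne'

lemma cont_q4 : ContinuousOn (q4 p T) (Set.Ici 0) := by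
  apply ContinuousOn.div (continuousOn_const.mul (cont_q6 hp hT)) (by fun_prop)
  intro l hl
  exact (qden_pos hp hT hl (d5_pos hp hT)).ne'

lemma cont_q1 : ContinuousOn (q1 p T) (Set.Ici 0) := by
  apply ContinuousOn.div
    ((continuousOn_const.mul (cont_q3 hp hT)).add (continuousOn_const.mul (cont_q4 hp hT)))
    (by fun_prop)
  intro l hl
  exact (qden_pos hp hT hl (hp.2.2.2.1 1)).ne'

lemma cont_q5 : ContinuousOn (q5 p T) (Set.Ici 0) := by
  apply ContinuousOn.div
    ((continuousOn_const.mul (cont_q1 hp hT)).add (continuousOn_const.mul (cont_q4 hp hT)))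
    (by fun_prop)
  intro l hl
  exact (qden_pos hp hT hl (d6_pos hp hT)).ne'

lemma cont_q0 : ContinuousOn (q0 p T) (Set.Ici 0) := by
  apply ContinuousOn.div
    ((continuousOn_const.mul (cont_q2 hp hT)).add (continuousOn_const.mul (cont_q5 hp hT)))
    (by fun_prop)
  intro l hl
  exact (qden_pos hp hT hl (hp.2.2.2.1 0)).ne'

lemma cont_H (τ₁ τ : ℝ) : ContinuousOn (Hfun p τ₁ τ T) (Set.Ici 0) := by
  unfold Hfun
  exact (continuousOn_const.mul
    ((continuousOn_const.mul (cont_q0 hp hT)).add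
      (continuousOn_const.mul (cont_q5 hp hT)))).add continuousOn_const

lemma q2_bdd {l : ℝ} (hl : 0 ≤ l) : 0 ≤ q2 p T l ∧ q2 p T l ≤ deriv (phi3 p) T := by
  have ha2 : 0 ≤ p.k 2 * (p.ρ 2 - phi3 p T) :=
    mul_nonneg (hp.1 2).le (sub_nonneg.2 (phi3_le hp hT))
  have hdp := qden_pos hp hT hl (d3_pos hp hT)
  constructor
  · exact div_nonneg ha2 hdp.le
  · rw [q2, div_le_iff₀ hdp]
    nlinarith only [Id3 hp hT, u3_nonneg hp hT, hl]

lemma q3_bdd {l : ℝ} (hl : 0 ≤ l) : 0 ≤ q3 p T l ∧ q3 p T l ≤ deriv (phi4 p) T := by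
  have ha : 0 ≤ p.k 3 * (p.ρ 3 - phi4 p T) :=
    mul_nonneg (hp.1 3).le (sub_nonneg.2 (phi4_le hp hT))
  have hdp := qden_pos hp hT hl (d4_pos hp hT)
  constructor
  · exact div_nonneg ha hdp.le
  · rw [q3, div_le_iff₀ hdp]
    nlinarith only [Id4 hp hT, u4_nonneg hp hT, hl]

lemma q6_bdd {l : ℝ} (hl : 0 ≤ l) : 0 ≤ q6 p T l ∧ q6 p T l ≤ deriv (phi7 p) T := by
  have ha : 0 ≤ p.k 6 * (p.ρ 6 - phi7 p T) :=
    mul_nonneg (hp.1 6).le (sub_nonneg.2 (phi7_le hp hT))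
  have hdp := qden_pos hp hT hl (d7_pos hp hT)
  constructor
  · exact div_nonneg ha hdp.le
  · rw [q6, div_le_iff₀ hdp]
    nlinarith only [Id7 hp hT, u7_nonneg hp hT, hl]

lemma q4_bdd {l : ℝ} (hl : 0 ≤ l) : 0 ≤ q4 p T l ∧ q4 p T l ≤ deriv (phi5 p) T := by
  have ha : 0 ≤ p.k 4 * (p.ρ 4 - phi5 p T) :=
    mul_nonneg (hp.1 4).le (sub_nonneg.2 (phi5_le hp hT))
  have hdp := qden_pos hp hT hl (d5_pos hp hT)
  obtain ⟨h60, h6u⟩ := q6_bdd hp hT hl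
  constructor
  · exact div_nonneg (mul_nonneg ha h60) hdp.le
  · rw [q4, div_le_iff₀ hdp]
    nlinarith only [Id5 hp hT, u5_nonneg hp hT, hl, mul_le_mul_of_nonneg_left h6u ha]

lemma q1_bdd {l : ℝ} (hl : 0 ≤ l) : 0 ≤ q1 p T l ∧ q1 p T l ≤ deriv (phi2 p) T := by
  have hb3 : 0 ≤ p.k 1 * phi5 p T := mul_nonneg (hp.1 1).le (phi5_nonneg hp hT)
  have hb4 : 0 ≤ p.k 1 * phi4 p T := mul_nonneg (hp.1 1).le (phi4_nonneg hp hT)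
  have hdp := qden_pos hp hT hl (hp.2.2.2.1 1)
  obtain ⟨h30, h3u⟩ := q3_bdd hp hT hl
  obtain ⟨h40, h4u⟩ := q4_bdd hp hT hl
  constructor
  · exact div_nonneg (add_nonneg (mul_nonneg hb3 h30) (mul_nonneg hb4 h40)) hdp.le
  · rw [q1, div_le_iff₀ hdp]
    nlinarith only [Id2 hp hT, u2_nonneg hp hT, hl,
      mul_le_mul_of_nonneg_left h3u hb3, mul_le_mul_of_nonneg_left h4u hb4]

lemma q5_bdd {l : ℝ} (hl : 0 ≤ l) : 0 ≤ q5 p T l ∧ q5 p T l ≤ deriv (phi6 p) T := by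
  have hb1 : 0 ≤ p.kb6 * (p.ρ 5 - phi6 p T) :=
    mul_nonneg hp.2.1.le (sub_nonneg.2 (phi6_le hp hT))
  have hb4 : 0 ≤ p.k 5 * (p.ρ 5 - phi6 p T) :=
    mul_nonneg (hp.1 5).le (sub_nonneg.2 (phi6_le hp hT))
  have hdp := qden_pos hp hT hl (d6_pos hp hT)
  obtain ⟨h10, h1u⟩ := q1_bdd hp hT hl
  obtain ⟨h40, h4u⟩ := q4_bdd hp hT hl
  constructor
  · exact div_nonneg (add_nonneg (mul_nonneg hb1 h10) (mul_nonneg hb4 h40)) hdp.le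
  · rw [q5, div_le_iff₀ hdp]
    nlinarith only [Id6 hp hT, u6_nonneg hp hT, hl,
      mul_le_mul_of_nonneg_left h1u hb1, mul_le_mul_of_nonneg_left h4u hb4]

lemma q0_bdd {l : ℝ} (hl : 0 ≤ l) : 0 ≤ q0 p T l ∧ q0 p T l ≤ deriv (phi1 p) T := by
  have hb2 : 0 ≤ p.k 0 * phi6 p T := mul_nonneg (hp.1 0).le (phi6_nonneg hp hT)
  have hb5 : 0 ≤ p.k 0 * phi3 p T := mul_nonneg (hp.1 0).le (phi3_nonneg hp hT)
  have hdp := qden_pos hp hT hl (hp.2.2.2.1 0)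
  obtain ⟨h20, h2u⟩ := q2_bdd hp hT hl
  obtain ⟨h50, h5u⟩ := q5_bdd hp hT hl
  constructor
  · exact div_nonneg (add_nonneg (mul_nonneg hb2 h20) (mul_nonneg hb5 h50)) hdp.le
  · rw [q0, div_le_iff₀ hdp]
    nlinarith only [Id1 hp hT, u1_nonneg hp hT, hl,
      mul_le_mul_of_nonneg_left h2u hb2, mul_le_mul_of_nonneg_left h5u hb5]

lemma q2_zero : q2 p T 0 = deriv (phi3 p) T := by
  rw [q2, zero_add, div_eq_iff (d3_pos hp hT).ne']
  linarith [Id3 hp hT]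

lemma q3_zero : q3 p T 0 = deriv (phi4 p) T := by
  rw [q3, zero_add, div_eq_iff (d4_pos hp hT).ne']
  linarith [Id4 hp hT]

lemma q6_zero : q6 p T 0 = deriv (phi7 p) T := by
  rw [q6, zero_add, div_eq_iff (d7_pos hp hT).ne']
  linarith [Id7 hp hT]

lemma q4_zero : q4 p T 0 = deriv (phi5 p) T := by
  rw [q4, q6_zero hp hT, zero_add, div_eq_iff (d5_pos hp hT).ne']
  linarith [Id5 hp hT]

lemma q1_zero : q1 p T 0 = deriv (phi2 p) T := by
  rw [q1, q3_zero hp hT, q4_zero hp hT, zero_add, div_eq_iff (hp.2.2.2.1 1).ne']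
  linarith [Id2 hp hT]

lemma q5_zero : q5 p T 0 = deriv (phi6 p) T := by
  rw [q5, q1_zero hp hT, q4_zero hp hT, zero_add, div_eq_iff (d6_pos hp hT).ne']
  linarith [Id6 hp hT]

lemma q0_zero : q0 p T 0 = deriv (phi1 p) T := by
  rw [q0, q2_zero hp hT, q5_zero hp hT, zero_add, div_eq_iff (hp.2.2.2.1 0).ne']
  linarith [Id1 hp hT]

end Qs
@[simp] lemma vec8_zero {α : Type*} (a0 a1 a2 a3 a4 a5 a6 a7 : α) :
    ![a0,a1,a2,a3,a4,a5,a6,a7] 0 = a0 := rfl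
@[simp] lemma vec8_one {α : Type*} (a0 a1 a2 a3 a4 a5 a6 a7 : α) :
    ![a0,a1,a2,a3,a4,a5,a6,a7] 1 = a1 := rfl
@[simp] lemma vec8_two {α : Type*} (a0 a1 a2 a3 a4 a5 a6 a7 : α) :
    ![a0,a1,a2,a3,a4,a5,a6,a7] 2 = a2 := rfl
@[simp] lemma vec8_three {α : Type*} (a0 a1 a2 a3 a4 a5 a6 a7 : α) :
    ![a0,a1,a2,a3,a4,a5,a6,a7] 3 = a3 := rfl
@[simp] lemma vec8_four {α : Type*} (a0 a1 a2 a3 a4 a5 a6 a7 : α) :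
    ![a0,a1,a2,a3,a4,a5,a6,a7] 4 = a4 := rfl

set_option maxHeartbeats 1600000 in
lemma unstable_aux (hp : p.Pos) (τ₁ τ : ℝ) (g : ℝ → ℝ) (hτ0 : 0 ≤ τ) (hτle : τ ≤ 1)
    (hτ₁0 : 0 < τ₁) (hτ₁1 : τ₁ < 1) (hgd : Differentiable ℝ g) {T : ℝ} (hT : 0 ≤ T)
    (hTρ : T ≤ p.ρ 7) (hg' : deriv g T = 0) (hP' : 0 < deriv (Ppoly p) T) :
    ∃ lam : ℂ, IsEig (Jac (Ftau p τ₁ g τ) (phivec p T)) lam ∧ 0 < lam.re := by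
  have hA0 : 0 ≤ (if τ < τ₁ then (1:ℝ) else (1 - τ) / (1 - τ₁)) := by
    split
    · norm_num
    · exact div_nonneg (by linarith) (by linarith)
  have hAB : (if τ < τ₁ then (1:ℝ) else (1 - τ) / (1 - τ₁))
      + (if τ < τ₁ then (0:ℝ) else (τ - τ₁) / (1 - τ₁)) = 1 := by
    split
    · norm_num
    · rw [← add_div]
      rw [show (1 - τ) + (τ - τ₁) = 1 - τ₁ by ring]
      exact div_self (by linarith)
  have IP := IdP hp hT
  have hH0 : Hfun p τ₁ τ T 0 = deriv (Ppoly p) T := by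
    unfold Hfun
    rw [q0_zero hp hT, q5_zero hp hT]
    linear_combination (-(if τ < τ₁ then (1:ℝ) else (1 - τ) / (1 - τ₁))) * IP
      + deriv (Ppoly p) T * hAB
  have hHle : ∀ l : ℝ, 0 ≤ l → Hfun p τ₁ τ T l ≤ deriv (Ppoly p) T := by
    intro l hl
    obtain ⟨h00, h0u⟩ := q0_bdd hp hT hl
    obtain ⟨h50, h5u⟩ := q5_bdd hp hT hl
    have hc0 : 0 ≤ p.kb8 * (p.ρ 7 - T) := mul_nonneg hp.2.2.1.le (by linarith)
    have hc5 : 0 ≤ p.k 7 * (p.ρ 7 - T) := mul_nonneg (hp.1 7).le (by linarith)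
    have key : p.kb8 * (p.ρ 7 - T) * q0 p T l + p.k 7 * (p.ρ 7 - T) * q5 p T l
        ≤ p.kb8 * (p.ρ 7 - T) * deriv (phi1 p) T + p.k 7 * (p.ρ 7 - T) * deriv (phi6 p) T :=
      add_le_add (mul_le_mul_of_nonneg_left h0u hc0) (mul_le_mul_of_nonneg_left h5u hc5)
    have hmul := mul_le_mul_of_nonneg_left key hA0
    have hIP3 : (if τ < τ₁ then (1:ℝ) else (1 - τ) / (1 - τ₁))
          * (p.kb8 * (p.ρ 7 - T) * deriv (phi1 p) T + p.k 7 * (p.ρ 7 - T) * deriv (phi6 p) T)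
        = (if τ < τ₁ then (1:ℝ) else (1 - τ) / (1 - τ₁)) * deriv (Ppoly p) T
          + (if τ < τ₁ then (1:ℝ) else (1 - τ) / (1 - τ₁))
            * (p.k 7 * phi6 p T + p.kb8 * phi1 p T + p.h 7) := by
      linear_combination (-(if τ < τ₁ then (1:ℝ) else (1 - τ) / (1 - τ₁))) * IP
    unfold Hfun
    rw [show (if τ < τ₁ then (0:ℝ) else (τ - τ₁) / (1 - τ₁))
        = 1 - (if τ < τ₁ then (1:ℝ) else (1 - τ) / (1 - τ₁)) by linarith]
    linarith only [hmul, hIP3, hP']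
  have hsub : Set.Icc (0:ℝ) (deriv (Ppoly p) T) ⊆ Set.Ici 0 := fun y hy => hy.1
  have hcont : ContinuousOn (fun l => Hfun p τ₁ τ T l - l)
      (Set.Icc 0 (deriv (Ppoly p) T)) :=
    ((cont_H hp hT τ₁ τ).mono hsub).sub continuousOn_id
  have hivt := intermediate_value_Icc' hP'.le hcont
  have hmem : (0:ℝ) ∈ Set.Icc ((fun l => Hfun p τ₁ τ T l - l) (deriv (Ppoly p) T))
      ((fun l => Hfun p τ₁ τ T l - l) 0) := by
    constructor
    · have := hHle (deriv (Ppoly p) T) hP'.le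
      simp only []
      linarith
    · simp only [sub_zero, hH0]
      exact hP'.le
  obtain ⟨l, hlmem, hleq⟩ := hivt hmem
  simp only [] at hleq
  have hl0 : 0 ≤ l := hlmem.1
  have hlpos : 0 < l := by
    rcases hl0.lt_or_eq with h | h
    · exact h
    · exfalso
      rw [← h, hH0] at hleq
      simp at hleq
      linarith
  have hdne : ∀ d : ℝ, 0 < d → l + d ≠ 0 := fun d hd => by positivity
  -- real component identities
  have r2 : (l + (p.k 2 * T + p.h 2)) * q2 p T l = p.k 2 * (p.ρ 2 - phi3 p T) := by
    rw [q2]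
    field_simp [hdne _ (d3_pos hp hT)]
  have r3 : (l + (p.k 3 * T + p.h 3)) * q3 p T l = p.k 3 * (p.ρ 3 - phi4 p T) := by
    rw [q3]
    field_simp [hdne _ (d4_pos hp hT)]
  have r6 : (l + (p.k 6 * T + p.h 6)) * q6 p T l = p.k 6 * (p.ρ 6 - phi7 p T) := by
    rw [q6]
    field_simp [hdne _ (d7_pos hp hT)]
  have r4 : (l + (p.k 4 * phi7 p T + p.h 4)) * q4 p T l
      = p.k 4 * (p.ρ 4 - phi5 p T) * q6 p T l := by
    rw [q4]
    field_simp [hdne _ (d5_pos hp hT)]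
  have r1 : (l + p.h 1) * q1 p T l
      = p.k 1 * phi5 p T * q3 p T l + p.k 1 * phi4 p T * q4 p T l := by
    rw [q1]
    field_simp [hdne _ (hp.2.2.2.1 1)]
  have r5 : (l + (p.k 5 * phi5 p T + p.kb6 * phi2 p T + p.h 5)) * q5 p T l
      = p.kb6 * (p.ρ 5 - phi6 p T) * q1 p T l + p.k 5 * (p.ρ 5 - phi6 p T) * q4 p T l := by
    rw [q5]
    field_simp [hdne _ (d6_pos hp hT)]
  have r0 : (l + p.h 0) * q0 p T l
      = p.k 0 * phi6 p T * q2 p T l + p.k 0 * phi3 p T * q5 p T l := by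
    rw [q0]
    field_simp [hdne _ (hp.2.2.2.1 0)]
  have r7 : (if τ < τ₁ then (1:ℝ) else (1 - τ) / (1 - τ₁)) *
        (p.kb8 * (p.ρ 7 - T) * q0 p T l + p.k 7 * (p.ρ 7 - T) * q5 p T l)
      + ((if τ < τ₁ then (1:ℝ) else (1 - τ) / (1 - τ₁)) *
          (-(p.k 7 * phi6 p T + p.kb8 * phi1 p T + p.h 7))
        + (if τ < τ₁ then (0:ℝ) else (τ - τ₁) / (1 - τ₁)) * deriv (Ppoly p) T) = l := by
    have h := hleq
    unfold Hfun at h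
    linarith only [h]
  have hPd : DifferentiableAt ℝ (Ppoly p) (phivec p T 7) := by
    rw [Pvec7]; exact diff_Ppoly hp hT
  have hgd7 : DifferentiableAt ℝ g (phivec p T 7) := hgd _
  set xv : Fin 8 → ℂ := fun i =>
    ((![q0 p T l, q1 p T l, q2 p T l, q3 p T l, q4 p T l, q5 p T l, q6 p T l,
        (1:ℝ)] i : ℝ) : ℂ) with hxv
  have hv0 : xv 0 = ((q0 p T l : ℝ) : ℂ) := rfl
  have hv1 : xv 1 = ((q1 p T l : ℝ) : ℂ) := rfl
  have hv2 : xv 2 = ((q2 p T l : ℝ) : ℂ) := rfl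
  have hv3 : xv 3 = ((q3 p T l : ℝ) : ℂ) := rfl
  have hv4 : xv 4 = ((q4 p T l : ℝ) : ℂ) := rfl
  have hv5 : xv 5 = ((q5 p T l : ℝ) : ℂ) := rfl
  have hv6 : xv 6 = ((q6 p T l : ℝ) : ℂ) := rfl
  have hv7 : xv 7 = ((1 : ℝ) : ℂ) := rfl
  have c0 := congrArg Complex.ofReal r0
  have c1 := congrArg Complex.ofReal r1
  have c2 := congrArg Complex.ofReal r2
  have c3 := congrArg Complex.ofReal r3
  have c4 := congrArg Complex.ofReal r4
  have c5 := congrArg Complex.ofReal r5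
  have c6 := congrArg Complex.ofReal r6
  have c7 := congrArg Complex.ofReal r7
  push_cast at c0 c1 c2 c3 c4 c5 c6 c7
  have e0 : ((Jac (Ftau p τ₁ g τ) (phivec p T)).map Complex.ofReal *ᵥ xv) 0
      = (((l : ℝ) : ℂ) • xv) 0 := by
    simp only [Matrix.mulVec, dotProduct, Fin.sum_univ_eight, Matrix.map_apply,
      Pi.smul_apply, smul_eq_mul, J00, J01, J02, J03, J04, J05, J06, J07,
      Pvec0, Pvec1, Pvec2, Pvec3, Pvec4, Pvec5, Pvec6, Pvec7, hg',
      hv0, hv1, hv2, hv3, hv4, hv5, hv6, hv7, Complex.ofReal_zero, Complex.ofReal_one,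
      zero_mul, add_zero, zero_add, mul_zero, mul_one]
    push_cast
    linear_combination -c0
  have e1 : ((Jac (Ftau p τ₁ g τ) (phivec p T)).map Complex.ofReal *ᵥ xv) 1
      = (((l : ℝ) : ℂ) • xv) 1 := by
    simp only [Matrix.mulVec, dotProduct, Fin.sum_univ_eight, Matrix.map_apply,
      Pi.smul_apply, smul_eq_mul, J10, J11, J12, J13, J14, J15, J16, J17,
      Pvec0, Pvec1, Pvec2, Pvec3, Pvec4, Pvec5, Pvec6, Pvec7, hg',
      hv0, hv1, hv2, hv3, hv4, hv5, hv6, hv7, Complex.ofReal_zero, Complex.ofReal_one,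
      zero_mul, add_zero, zero_add, mul_zero, mul_one]
    push_cast
    linear_combination -c1
  have e2 : ((Jac (Ftau p τ₁ g τ) (phivec p T)).map Complex.ofReal *ᵥ xv) 2
      = (((l : ℝ) : ℂ) • xv) 2 := by
    simp only [Matrix.mulVec, dotProduct, Fin.sum_univ_eight, Matrix.map_apply,
      Pi.smul_apply, smul_eq_mul, J20, J21, J22, J23, J24, J25, J26, J27,
      Pvec0, Pvec1, Pvec2, Pvec3, Pvec4, Pvec5, Pvec6, Pvec7, hg',
      hv0, hv1, hv2, hv3, hv4, hv5, hv6, hv7, Complex.ofReal_zero, Complex.ofReal_one,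
      zero_mul, add_zero, zero_add, mul_zero, mul_one]
    push_cast
    linear_combination -c2
  have e3 : ((Jac (Ftau p τ₁ g τ) (phivec p T)).map Complex.ofReal *ᵥ xv) 3
      = (((l : ℝ) : ℂ) • xv) 3 := by
    simp only [Matrix.mulVec, dotProduct, Fin.sum_univ_eight, Matrix.map_apply,
      Pi.smul_apply, smul_eq_mul, J30, J31, J32, J33, J34, J35, J36, J37,
      Pvec0, Pvec1, Pvec2, Pvec3, Pvec4, Pvec5, Pvec6, Pvec7, hg',
      hv0, hv1, hv2, hv3, hv4, hv5, hv6, hv7, Complex.ofReal_zero, Complex.ofReal_one,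
      zero_mul, add_zero, zero_add, mul_zero, mul_one]
    push_cast
    linear_combination -c3
  have e4 : ((Jac (Ftau p τ₁ g τ) (phivec p T)).map Complex.ofReal *ᵥ xv) 4
      = (((l : ℝ) : ℂ) • xv) 4 := by
    simp only [Matrix.mulVec, dotProduct, Fin.sum_univ_eight, Matrix.map_apply,
      Pi.smul_apply, smul_eq_mul, J40, J41, J42, J43, J44, J45, J46, J47,
      Pvec0, Pvec1, Pvec2, Pvec3, Pvec4, Pvec5, Pvec6, Pvec7, hg',
      hv0, hv1, hv2, hv3, hv4, hv5, hv6, hv7, Complex.ofReal_zero, Complex.ofReal_one,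
      zero_mul, add_zero, zero_add, mul_zero, mul_one]
    push_cast
    linear_combination -c4
  have e5 : ((Jac (Ftau p τ₁ g τ) (phivec p T)).map Complex.ofReal *ᵥ xv) 5
      = (((l : ℝ) : ℂ) • xv) 5 := by
    simp only [Matrix.mulVec, dotProduct, Fin.sum_univ_eight, Matrix.map_apply,
      Pi.smul_apply, smul_eq_mul, J50, J51, J52, J53, J54, J55, J56, J57,
      Pvec0, Pvec1, Pvec2, Pvec3, Pvec4, Pvec5, Pvec6, Pvec7, hg',
      hv0, hv1, hv2, hv3, hv4, hv5, hv6, hv7, Complex.ofReal_zero, Complex.ofReal_one,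
      zero_mul, add_zero, zero_add, mul_zero, mul_one]
    push_cast
    linear_combination -c5
  have e6 : ((Jac (Ftau p τ₁ g τ) (phivec p T)).map Complex.ofReal *ᵥ xv) 6
      = (((l : ℝ) : ℂ) • xv) 6 := by
    simp only [Matrix.mulVec, dotProduct, Fin.sum_univ_eight, Matrix.map_apply,
      Pi.smul_apply, smul_eq_mul, J60, J61, J62, J63, J64, J65, J66, J67,
      Pvec0, Pvec1, Pvec2, Pvec3, Pvec4, Pvec5, Pvec6, Pvec7, hg',
      hv0, hv1, hv2, hv3, hv4, hv5, hv6, hv7, Complex.ofReal_zero, Complex.ofReal_one,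
      zero_mul, add_zero, zero_add, mul_zero, mul_one]
    push_cast
    linear_combination -c6
  have e7 : ((Jac (Ftau p τ₁ g τ) (phivec p T)).map Complex.ofReal *ᵥ xv) 7
      = (((l : ℝ) : ℂ) • xv) 7 := by
    simp only [Matrix.mulVec, dotProduct, Fin.sum_univ_eight, Matrix.map_apply,
      Pi.smul_apply, smul_eq_mul, J70, J71, J72, J73, J74, J75, J76, J77 p τ₁ τ g (phivec p T) hPd hgd7,
      Pvec0, Pvec1, Pvec2, Pvec3, Pvec4, Pvec5, Pvec6, Pvec7, hg',
      hv0, hv1, hv2, hv3, hv4, hv5, hv6, hv7, Complex.ofReal_zero, Complex.ofReal_one,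
      zero_mul, add_zero, zero_add, mul_zero, mul_one]
    push_cast
    linear_combination c7
  refine ⟨((l : ℝ) : ℂ), ⟨xv, ?_, ?_⟩, by simpa using hlpos⟩
  · intro h
    have h7 := congrFun h 7
    rw [hv7] at h7
    simp at h7
  · funext i
    fin_cases i
    exacts [e0, e1, e2, e3, e4, e5, e6, e7]
lemma phivec_zero (p : Params) : phivec p 0 = 0 := by
  have h7 : phi7 p 0 = 0 := by simp [phi7]
  have h3 : phi3 p 0 = 0 := by simp [phi3]
  have h4 : phi4 p 0 = 0 := by simp [phi4]
  have h5 : phi5 p 0 = 0 := by simp [phi5, h7]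
  have h2 : phi2 p 0 = 0 := by simp [phi2, h4, h5]
  have h6 : phi6 p 0 = 0 := by simp [phi6, h5, h2]
  have h1 : phi1 p 0 = 0 := by simp [phi1, h3, h6]
  funext i
  fin_cases i <;>
    simp [phivec, h1, h2, h3, h4, h5, h6, h7]

lemma deriv_g_zero {Tb Tm : ℝ} {g : ℝ → ℝ} (hg : GoodG Tb Tm g) {T : ℝ}
    (hT : T ∉ Set.Ioo Tb Tm) : deriv g T = 0 := by
  have hsupp : T ∉ tsupport g := fun h => hT (hg.2.2 h)
  have hev : g =ᶠ[𝓝 T] (fun _ => 0) := by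
    filter_upwards [(isClosed_tsupport g).isOpen_compl.mem_nhds hsupp] with s hs
    exact image_eq_zero_of_notMem_tsupport hs
  rw [hev.deriv_eq]
  exact deriv_const _ _

lemma T_lt_rho7 (hp : p.Pos) {T : ℝ} (hT : 0 < T) (h0 : Ppoly p T = 0) : T < p.ρ 7 := by
  by_contra h
  push_neg at h
  have hQ : 0 ≤ p.k 7 * phi6 p T + p.kb8 * phi1 p T :=
    add_nonneg (mul_nonneg (hp.1 7).le (phi6_nonneg hp hT.le))
      (mul_nonneg hp.2.2.1.le (phi1_nonneg hp hT.le))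
  have hlt : Ppoly p T < 0 := by
    rw [Ppoly]
    nlinarith [mul_nonneg hQ (sub_nonneg.2 h), hp.2.2.2.1 7]
  linarith [hlt, le_of_eq h0]

end StabAux

/-- Along the whole homotopy, `w⁺` and `w⁻` are stable (all eigenvalues of the Jacobian have
negative real part) while `w̄` is unstable (some eigenvalue has positive real part). -/
theorem stationary_points_stability (p : Params) (hp : p.Pos) (Tb Tm : ℝ)
    (hP : CondP p Tb Tm) (τ₁ : ℝ) (hτ₁ : τ₁ ∈ Set.Ioo (0 : ℝ) 1) (g : ℝ → ℝ)
    (hg : GoodG Tb Tm g) :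
    ∀ τ ∈ Set.Icc (0 : ℝ) 1,
      (∀ lam : ℂ, IsEig (Jac (Ftau p τ₁ g τ) 0) lam → lam.re < 0) ∧
      (∀ lam : ℂ, IsEig (Jac (Ftau p τ₁ g τ) (phivec p Tm)) lam → lam.re < 0) ∧
      (∃ lam : ℂ, IsEig (Jac (Ftau p τ₁ g τ) (phivec p Tb)) lam ∧ 0 < lam.re) := by
  intro τ hτ
  obtain ⟨hTb0, hTbm, hzeros, hP0, hPb, hPm⟩ := hP
  have hTm0 : 0 < Tm := lt_trans hTb0 hTbm
  have hgdiff : Differentiable ℝ g := (hg.1).differentiable (by simp)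
  have hPbz : Ppoly p Tb = 0 := (hzeros Tb hTb0.le).2 (Or.inr (Or.inl rfl))
  have hPmz : Ppoly p Tm = 0 := (hzeros Tm hTm0.le).2 (Or.inr (Or.inr rfl))
  have hTbρ : Tb < p.ρ 7 := StabAux.T_lt_rho7 hp hTb0 hPbz
  have hTmρ : Tm < p.ρ 7 := StabAux.T_lt_rho7 hp hTm0 hPmz
  have hg0 : deriv g 0 = 0 := StabAux.deriv_g_zero hg (fun h => absurd h.1 (by linarith))
  have hgb : deriv g Tb = 0 := StabAux.deriv_g_zero hg (fun h => absurd h.1 (by linarith [h.1]))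
  have hgm : deriv g Tm = 0 := StabAux.deriv_g_zero hg (fun h => absurd h.2 (by linarith [h.2]))
  refine ⟨?_, ?_, ?_⟩
  · have h := StabAux.stable_aux hp τ₁ τ g hτ.1 hτ.2 hτ₁.1 hτ₁.2 hgdiff (le_refl (0:ℝ))
      (le_of_lt ((hp.2.2.2.2.1 7 (by decide)))) hg0 hP0
    rwa [StabAux.phivec_zero p] at h
  · exact StabAux.stable_aux hp τ₁ τ g hτ.1 hτ.2 hτ₁.1 hτ₁.2 hgdiff hTm0.le hTmρ.le hgm hPm
  · exact StabAux.unstable_aux hp τ₁ τ g hτ.1 hτ.2 hτ₁.1 hτ₁.2 hgdiff hTb0.le hTbρ.le hgb hPb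

end
end
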